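/- arXiv:0906.3853 — 8 statements merged into one kernel-verified Lean document; each statement's English description precedes it below -/
import Mathlib

section
/- For all integers n ≥ 1 and k ≥ 1, there is a one-to-one correspondence (a bijection) between the set of strings (s_i)_{i∈[0,kn−1]} with s_i ∈ [0,n−1] satisfying rules (R1) and (R2), and the set of isomorphism classes of initially-connected complete deterministic finite automaton structures (ICDFA∅'s) with n states over an alphabet of k symbols. -/
/-- Rule (R1): for every `m ∈ [2,n-1]` and every index `i`, if `s i = m` then
some earlier position carries `m - 1`. -/
def RuleR1 (n k : ℕ) (s : Fin (k * n) → Fin n) : Prop :=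
  ∀ m : ℕ, 2 ≤ m → m ≤ n - 1 → ∀ i : Fin (k * n), (s i : ℕ) = m →
    ∃ j : Fin (k * n), (j : ℕ) < (i : ℕ) ∧ (s j : ℕ) = m - 1

/-- Rule (R2): every `m ∈ [1,n-1]` occurs at some position `j < k*m`. -/
def RuleR2 (n k : ℕ) (s : Fin (k * n) → Fin n) : Prop :=
  ∀ m : ℕ, 1 ≤ m → m ≤ n - 1 → ∃ j : Fin (k * n), (j : ℕ) < k * m ∧ (s j : ℕ) = m

/-- A complete DFA structure with `n` states over a `k`-letter alphabet
(final states disregarded): a transition function and an initial state. -/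
structure DFAStruct (n k : ℕ) where
  delta : Fin n → Fin k → Fin n
  q0 : Fin n

/-- Extension of the transition function to words. -/
def deltaStar {n k : ℕ} (d : Fin n → Fin k → Fin n) : Fin n → List (Fin k) → Fin n
  | q, [] => q
  | q, a :: w => deltaStar d (d q a) w

/-- Initially connected: every state is reachable from the initial state. -/
def InitiallyConn {n k : ℕ} (A : DFAStruct n k) : Prop :=
  ∀ q : Fin n, ∃ w : List (Fin k), deltaStar A.delta A.q0 w = q

/-- Isomorphism of DFA structures. -/
def IsIso {n k : ℕ} (A B : DFAStruct n k) : Prop :=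
  ∃ f : Fin n ≃ Fin n, f A.q0 = B.q0 ∧ ∀ q σ, f (A.delta q σ) = B.delta (f q) σ

/-!
Number the words over `Fin k` by their bijective base-`k` numerals, so that numerical order is
shortlex order, and give every state the least numeral of a word reaching it. Breadth-first
order is the order of these access numbers: the access number of a state other than `q0` is
`k * M + a + 1`, where `M` is the access number of its breadth-first parent and `a` the letter
leading to it. Sorting the states by access number therefore gives a string satisfying (R1)
and (R2) whose automaton is isomorphic to the given one.

Conversely, let `f` be an isomorphism between the automata of two such strings `s` and `t`, and
suppose `f` fixes every state below `m ≥ 1`. The first cell of `s` holding a value `≥ m` holds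
`m` by (R1) and lies in a row `< m` by (R2); up to that cell `t = f ∘ s`, so `t` takes values
`< m` before it and the value `f m ≥ m` there, and (R1) for `t` forces `f m = m`.
-/

theorem Nat.mul_add_lt_mul_add_iff {k x y a b : ℕ} (ha : a < k) (hb : b < k) :
    k * x + a < k * y + b ↔ x < y ∨ x = y ∧ a < b := by
  have step {x y : ℕ} (h : x < y) : k * x + k ≤ k * y := by
    simpa [Nat.mul_succ] using Nat.mul_le_mul_left k h
  constructor
  · intro h
    rcases lt_trichotomy x y with hxy | rfl | hxy
    · exact Or.inl hxy
    · exact Or.inr ⟨rfl, by omega⟩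
    · have := step hxy
      omega
  · rintro (hxy | ⟨rfl, hab⟩)
    · have := step hxy
      omega
    · omega

def cell {n k : ℕ} : Fin n × Fin k ≃ Fin (k * n) :=
  finProdFinEquiv.trans (finCongr (Nat.mul_comm n k))

@[simp]
lemma val_cell {n k : ℕ} (p : Fin n × Fin k) : (cell p : ℕ) = k * p.1 + p.2 := by
  simp [cell, finProdFinEquiv, Nat.add_comm]

lemma isIso_equivalence {n k : ℕ} : Equivalence (@IsIso n k) where
  refl _ := ⟨Equiv.refl _, rfl, fun _ _ => rfl⟩
  symm := by
    rintro A B ⟨f, h0, hd⟩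
    refine ⟨f.symm, f.symm_apply_eq.2 h0.symm, fun q σ => f.symm_apply_eq.2 ?_⟩
    rw [hd, f.apply_symm_apply]
  trans := by
    rintro A B C ⟨f, hf0, hfd⟩ ⟨g, hg0, hgd⟩
    exact ⟨f.trans g, by simp [hf0, hg0], fun q σ => by simp [hfd, hgd]⟩

def toDFA {n k : ℕ} [NeZero n] (s : Fin (k * n) → Fin n) : DFAStruct n k :=
  ⟨fun q a => s (cell (q, a)), 0⟩

lemma deltaStar_append_singleton {n k : ℕ} (d : Fin n → Fin k → Fin n) (q : Fin n)
    (w : List (Fin k)) (a : Fin k) : deltaStar d q (w ++ [a]) = d (deltaStar d q w) a := by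
  induction w generalizing q with
  | nil => rfl
  | cons b w ih => exact ih (d q b)

namespace DFAStruct

variable {n k : ℕ} [NeZero k] (A : DFAStruct n k)

/-- `A.reach N` is the state reached by the word whose bijective base-`k` numeral (digits
`1, …, k`) is `N`; numerical order of these numerals is the shortlex order of words. -/
def reach : ℕ → Fin n
  | 0 => A.q0
  | N + 1 => A.delta (reach (N / k)) (Fin.ofNat k N)
decreasing_by exact Nat.lt_succ_of_le (Nat.div_le_self N k)

lemma reach_mul_add_succ (M : ℕ) (a : Fin k) :
    A.reach (k * M + a + 1) = A.delta (A.reach M) a := by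
  rw [reach]
  congr
  · rw [Nat.mul_add_div (NeZero.pos k), Nat.div_eq_of_lt a.2, Nat.add_zero]
  · ext; simp [Nat.mod_eq_of_lt a.2]

lemma initiallyConn_iff_surjective_reach : InitiallyConn A ↔ Function.Surjective A.reach := by
  constructor
  · intro hA q
    obtain ⟨w, rfl⟩ := hA q
    suffices ∀ p ∈ Set.range A.reach, deltaStar A.delta p w ∈ Set.range A.reach from
      this A.q0 ⟨0, by rw [reach]⟩
    induction w with
    | nil => exact fun p hp => hp
    | cons a w ih =>
      rintro _ ⟨M, rfl⟩
      exact ih _ ⟨k * M + a + 1, A.reach_mul_add_succ M a⟩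
  · intro hA q
    obtain ⟨N, rfl⟩ := hA q
    induction N using Nat.strong_induction_on with
    | _ N ih =>
      rcases N with _ | N
      · exact ⟨[], by rw [reach]; rfl⟩
      · obtain ⟨w, hw⟩ := ih (N / k) (Nat.lt_succ_of_le (Nat.div_le_self N k))
        refine ⟨w ++ [Fin.ofNat k N], ?_⟩
        rw [deltaStar_append_singleton, hw, reach]

noncomputable def accessNum (q : Fin n) : ℕ := sInf {N | A.reach N = q}

lemma accessNum_le {N : ℕ} {q : Fin n} (h : A.reach N = q) : A.accessNum q ≤ N :=
  Nat.sInf_le h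

lemma accessNum_q0 : A.accessNum A.q0 = 0 :=
  Nat.le_zero.1 (A.accessNum_le (by rw [reach]))

variable {A}

lemma reach_accessNum (hA : InitiallyConn A) (q : Fin n) : A.reach (A.accessNum q) = q :=
  Nat.sInf_mem ((initiallyConn_iff_surjective_reach A).1 hA q)

lemma accessNum_injective (hA : InitiallyConn A) : Function.Injective A.accessNum :=
  Function.LeftInverse.injective (reach_accessNum hA)

lemma accessNum_delta_le (hA : InitiallyConn A) (p : Fin n) (a : Fin k) :
    A.accessNum (A.delta p a) ≤ k * A.accessNum p + a + 1 :=
  A.accessNum_le (by rw [reach_mul_add_succ, reach_accessNum hA])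

lemma exists_accessNum_eq_of_ne_q0 (hA : InitiallyConn A) {q : Fin n} (hq : q ≠ A.q0) :
    ∃ p a, A.delta p a = q ∧ A.accessNum q = k * A.accessNum p + a + 1 := by
  obtain ⟨N, hN⟩ : ∃ N, A.accessNum q = N + 1 := by
    refine Nat.exists_eq_succ_of_ne_zero fun h => hq ?_
    rw [← reach_accessNum hA q, h, reach]
  have hN' : N + 1 = k * (N / k) + (Fin.ofNat k N : ℕ) + 1 := by
    rw [Fin.val_ofNat, Nat.div_add_mod]
  have hδ : A.delta (A.reach (N / k)) (Fin.ofNat k N) = q := by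
    rw [← reach_mul_add_succ, ← hN', ← hN, reach_accessNum hA]
  refine ⟨_, _, hδ, le_antisymm ?_ ?_⟩
  · exact hδ ▸ accessNum_delta_le hA _ _
  · rw [hN, hN']
    have := A.accessNum_le (rfl : A.reach (N / k) = _)
    have := Nat.mul_le_mul_left k this
    omega

noncomputable def bfsRank : Equiv.Perm (Fin n) := (Tuple.sort A.accessNum).symm

lemma bfsRank_lt_bfsRank_iff (hA : InitiallyConn A) {p q : Fin n} :
    A.bfsRank p < A.bfsRank q ↔ A.accessNum p < A.accessNum q := by
  have hmono : StrictMono (A.accessNum ∘ Tuple.sort A.accessNum) :=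
    (Tuple.monotone_sort _).strictMono_of_injective
      ((accessNum_injective hA).comp (Equiv.injective _))
  simpa [bfsRank] using (hmono.lt_iff_lt (a := A.bfsRank p) (b := A.bfsRank q)).symm

lemma bfsRank_q0 [NeZero n] (hA : InitiallyConn A) : A.bfsRank A.q0 = 0 := by
  by_contra h
  have := (bfsRank_lt_bfsRank_iff hA (p := A.bfsRank.symm 0) (q := A.q0)).1
    (by simpa [Fin.pos_iff_ne_zero] using h)
  rw [accessNum_q0] at this
  exact Nat.not_lt_zero _ this

noncomputable def canonicalString : Fin (k * n) → Fin n :=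
  fun j => A.bfsRank (A.delta (A.bfsRank.symm (cell.symm j).1) (cell.symm j).2)

@[simp]
lemma canonicalString_cell (i : Fin n) (a : Fin k) :
    A.canonicalString (cell (i, a)) = A.bfsRank (A.delta (A.bfsRank.symm i) a) := by
  simp [canonicalString]

lemma isIso_toDFA_canonicalString [NeZero n] (hA : InitiallyConn A) :
    IsIso (toDFA A.canonicalString) A :=
  ⟨A.bfsRank.symm, A.bfsRank.symm_apply_eq.2 (bfsRank_q0 hA).symm,
    fun q a => by simp [toDFA]⟩

lemma exists_canonicalString_cell_eq [NeZero n] (hA : InitiallyConn A) {m : Fin n}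
    (hm : m ≠ 0) :
    ∃ p a, A.canonicalString (cell (A.bfsRank p, a)) = m ∧
      A.accessNum (A.bfsRank.symm m) = k * A.accessNum p + a + 1 := by
  have hq : A.bfsRank.symm m ≠ A.q0 := fun h => hm (by rw [← bfsRank_q0 hA, ← h]; simp)
  obtain ⟨p, a, hδ, hacc⟩ := exists_accessNum_eq_of_ne_q0 hA hq
  exact ⟨p, a, by simp [hδ], hacc⟩

lemma ruleR2_canonicalString [NeZero n] (hA : InitiallyConn A) :
    RuleR2 n k A.canonicalString := by
  intro m hm hmn
  obtain ⟨p, a, hval, hacc⟩ :=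
    exists_canonicalString_cell_eq hA (m := ⟨m, by omega⟩)
      (Fin.ne_of_val_ne (by simpa using Nat.one_le_iff_ne_zero.1 hm))
  refine ⟨_, ?_, congrArg Fin.val hval⟩
  have hacc_lt : A.accessNum p < A.accessNum (A.bfsRank.symm ⟨m, by omega⟩) := by
    have := Nat.le_mul_of_pos_left (A.accessNum p) (NeZero.pos k)
    omega
  have hp : A.bfsRank p < ⟨m, by omega⟩ := by
    simpa using (bfsRank_lt_bfsRank_iff hA).2 hacc_lt
  simpa using (Nat.mul_add_lt_mul_add_iff a.2 (NeZero.pos k)).2 (Or.inl hp)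

lemma ruleR1_canonicalString [NeZero n] (hA : InitiallyConn A) :
    RuleR1 n k A.canonicalString := by
  intro m hm hmn j hj
  obtain ⟨⟨i, b⟩, rfl⟩ := cell.surjective j
  obtain ⟨p, a, hval, hacc⟩ :=
    exists_canonicalString_cell_eq hA (m := ⟨m - 1, by omega⟩)
      (Fin.ne_of_val_ne (by simpa using (by omega : m - 1 ≠ 0)))
  refine ⟨_, ?_, by rw [hval]⟩
  have hlt : A.accessNum (A.bfsRank.symm ⟨m - 1, by omega⟩) <
      A.accessNum (A.delta (A.bfsRank.symm i) b) := by
    refine (bfsRank_lt_bfsRank_iff hA).1 ?_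
    simp only [canonicalString_cell] at hj
    rw [Equiv.apply_symm_apply, Fin.lt_def, hj]
    exact Nat.sub_lt (by omega) Nat.one_pos
  have := accessNum_delta_le hA (A.bfsRank.symm i) b
  have hlex : k * A.accessNum p + a < k * A.accessNum (A.bfsRank.symm i) + b := by omega
  rcases (Nat.mul_add_lt_mul_add_iff a.2 b.2).1 hlex with h | ⟨h, hab⟩
  · have := (bfsRank_lt_bfsRank_iff hA).2 h
    simp only [Equiv.apply_symm_apply] at this
    simpa using (Nat.mul_add_lt_mul_add_iff a.2 b.2).2 (Or.inl this)
  · obtain rfl := accessNum_injective hA h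
    simp only [val_cell, Equiv.apply_symm_apply]
    omega

end DFAStruct

lemma RuleR1.eq_of_forall_lt {n k : ℕ} {s : Fin (k * n) → Fin n} (hs : RuleR1 n k s) {m : ℕ}
    (hm : 1 ≤ m) {i : Fin (k * n)} (hbelow : ∀ j < i, (s j : ℕ) < m) (hi : m ≤ s i) :
    (s i : ℕ) = m := by
  by_contra hne
  obtain ⟨j, hji, hj⟩ := hs (s i) (by omega) (by omega) i rfl
  have := hbelow j hji
  omega

lemma initiallyConn_toDFA {n k : ℕ} [NeZero n] [NeZero k] {s : Fin (k * n) → Fin n}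
    (hs : RuleR2 n k s) : InitiallyConn (toDFA (k := k) s) := by
  refine ((toDFA s).initiallyConn_iff_surjective_reach).2 fun q => ?_
  induction q using WellFoundedLT.induction with
  | ind q ih =>
    rcases eq_or_ne q 0 with rfl | hq
    · exact ⟨0, by rw [DFAStruct.reach]; rfl⟩
    · obtain ⟨j, hj, hsj⟩ :=
        hs q (Nat.one_le_iff_ne_zero.2 (Fin.val_ne_zero_iff.2 hq)) (by omega)
      obtain ⟨⟨p, a⟩, rfl⟩ := cell.surjective j
      have hp : p < q := by
        simp only [val_cell] at hj
        exact Nat.lt_of_mul_lt_mul_left (by omega : k * p < k * q)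
      obtain ⟨N, hN⟩ := ih p hp
      exact ⟨k * N + a + 1, by rw [DFAStruct.reach_mul_add_succ, hN]; exact Fin.ext hsj⟩

section Rigidity

variable {n k : ℕ} {s t : Fin (k * n) → Fin n} {f : Fin n ≃ Fin n}

lemma eq_apply_of_lt_mul (hf : ∀ q a, f (s (cell (q, a))) = t (cell (f q, a))) {m : ℕ}
    (hfix : ∀ q : Fin n, (q : ℕ) < m → f q = q) {j : Fin (k * n)} (hj : (j : ℕ) < k * m) :
    t j = f (s j) := by
  obtain ⟨⟨q, a⟩, rfl⟩ := cell.surjective j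
  simp only [val_cell] at hj
  rw [hf, hfix q (Nat.lt_of_mul_lt_mul_left (by omega : k * q < k * m))]

lemma eq_refl_of_ruleR1_ruleR2 [NeZero n] (hs1 : RuleR1 n k s) (hs2 : RuleR2 n k s)
    (ht1 : RuleR1 n k t) (hf0 : f 0 = 0) (hf : ∀ q a, f (s (cell (q, a))) = t (cell (f q, a))) :
    f = Equiv.refl _ := by
  suffices ∀ m, ∀ q : Fin n, (q : ℕ) < m → f q = q from Equiv.ext fun q => this n q q.2
  intro m
  induction m with
  | zero => exact fun q hq => absurd hq (Nat.not_lt_zero _)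
  | succ m ih =>
    intro q hq
    rcases Nat.lt_succ_iff_lt_or_eq.1 hq with hq | hqm
    · exact ih q hq
    rcases Nat.eq_zero_or_pos m with rfl | hm
    · rw [show q = 0 from Fin.ext hqm, hf0]
    obtain ⟨j₀, hj₀, hsj₀⟩ := hs2 m hm (by omega)
    obtain ⟨i, hi, hmin⟩ := wellFounded_lt.has_min {i | m ≤ (s i : ℕ)} ⟨j₀, hsj₀.ge⟩
    have hs_below : ∀ j < i, (s j : ℕ) < m := fun j hj => not_le.1 fun h => hmin j h hj
    have hsi : s i = q := Fin.ext ((hs1.eq_of_forall_lt hm hs_below hi).trans hqm.symm)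
    have hik : (i : ℕ) < k * m := lt_of_le_of_lt (not_lt.1 (hmin j₀ hsj₀.ge)) hj₀
    have ht_below : ∀ j < i, (t j : ℕ) < m := fun j hj => by
      rw [eq_apply_of_lt_mul hf ih (by omega : (j : ℕ) < k * m), ih _ (hs_below j hj)]
      exact hs_below j hj
    have hfq : m ≤ (f q : ℕ) := by
      by_contra h
      have := f.injective (ih _ (not_le.1 h))
      omega
    have hti : t i = f q := by rw [eq_apply_of_lt_mul hf ih hik, hsi]
    exact Fin.ext (by rw [← hti, ht1.eq_of_forall_lt hm ht_below (hti ▸ hfq), hqm])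

lemma eq_of_isIso_toDFA [NeZero n] (hs1 : RuleR1 n k s) (hs2 : RuleR2 n k s)
    (ht1 : RuleR1 n k t) (h : IsIso (toDFA s) (toDFA t)) : s = t := by
  obtain ⟨f, hf0, hf⟩ := h
  obtain rfl := eq_refl_of_ruleR1_ruleR2 hs1 hs2 ht1 hf0 hf
  funext j
  obtain ⟨p, rfl⟩ := cell.surjective j
  simpa [toDFA] using hf p.1 p.2

end Rigidity

/-- There is a bijection between strings satisfying (R1) and (R2) and
isomorphism classes of initially-connected DFA structures with `n` states
over a `k`-letter alphabet. -/
theorem stmt0 (n k : ℕ) (hn : 1 ≤ n) (hk : 1 ≤ k) :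
    Nonempty
      ({s : Fin (k * n) → Fin n // RuleR1 n k s ∧ RuleR2 n k s} ≃
        Quot (fun A B : {A : DFAStruct n k // InitiallyConn A} => IsIso A.1 B.1)) := by
  have : NeZero n := ⟨by omega⟩
  have : NeZero k := ⟨by omega⟩
  refine ⟨Equiv.ofBijective
    (fun s => Quot.mk _ ⟨toDFA s.1, initiallyConn_toDFA s.2.2⟩) ⟨?_, ?_⟩⟩
  · rintro ⟨s, hs1, hs2⟩ ⟨t, ht1, _⟩ h
    exact Subtype.ext <| eq_of_isIso_toDFA hs1 hs2 ht1 <|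
      ((isIso_equivalence.comap Subtype.val).quot_mk_eq_iff _ _).1 h
  · rintro ⟨⟨A, hA⟩⟩
    exact ⟨⟨A.canonicalString, A.ruleR1_canonicalString hA, A.ruleR2_canonicalString hA⟩,
      Quot.sound (A.isIso_toDFA_canonicalString hA)⟩
end

section
/- For all integers n ≥ 1 and k ≥ 1, if two strings (s_i)_{i∈[0,kn−1]} and (s'_i)_{i∈[0,kn−1]} with entries in [0,n−1] both satisfy rules (R1) and (R2) and are distinct, then the corresponding automaton structures (state set {0,…,n−1}, initial state 0, transitions δ(q,σ_j) = s_{kq+j} and δ'(q,σ_j) = s'_{kq+j}) are not isomorphic. -/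
/-- The transition function determined by a string: `δ(q, σ_j) = s_{k q + j}`. -/
def stringDelta {n k : ℕ} (s : Fin (k * n) → Fin n) (q : Fin n) (σ : Fin k) : Fin n :=
  s ⟨k * (q : ℕ) + (σ : ℕ), by
    calc k * (q : ℕ) + (σ : ℕ) < k * (q : ℕ) + k := Nat.add_lt_add_left σ.isLt _
      _ = k * ((q : ℕ) + 1) := (Nat.mul_succ k (q : ℕ)).symm
      _ ≤ k * n := Nat.mul_le_mul_left k q.isLt⟩

section
variable {n k : ℕ} {s s' : Fin (k * n) → Fin n}

lemma exists_stringDelta_eq (i : Fin (k * n)) :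
    ∃ (q : Fin n) (σ : Fin k), k * (q : ℕ) ≤ i ∧
      ∀ t : Fin (k * n) → Fin n, stringDelta t q σ = t i := by
  have hk : 0 < k := Nat.pos_of_mul_pos_right (Nat.zero_lt_of_lt i.isLt)
  refine ⟨⟨i / k, Nat.div_lt_of_lt_mul i.isLt⟩, ⟨i % k, Nat.mod_lt _ hk⟩,
    Nat.mul_div_le _ _, fun t => ?_⟩
  exact congrArg t (Fin.ext (Nat.div_add_mod i k))

lemma RuleR1.exists_lt_eq (h : RuleR1 n k s) {m : ℕ} (hm : 1 ≤ m) {i : Fin (k * n)}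
    (hi : m < s i) : ∃ j < i, (s j : ℕ) = m := by
  obtain ⟨d, hd⟩ : ∃ d, (s i : ℕ) = m + 1 + d := ⟨_, (Nat.add_sub_of_le hi).symm⟩
  have hsi := (s i).isLt
  induction d generalizing i with
  | zero =>
    obtain ⟨j, hj, hsj⟩ := h (m + 1) (by omega) (by omega) i hd
    exact ⟨j, hj, hsj⟩
  | succ d ih =>
    obtain ⟨j₁, hj₁, hsj₁⟩ := h _ (by omega) (by omega) i hd
    obtain ⟨j, hj, hsj⟩ := ih (i := j₁) (by omega) (by omega) (s j₁).isLt
    exact ⟨j, hj.trans hj₁, hsj⟩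

lemma RuleR2.apply_eq_self (hn : 1 ≤ n) (h : RuleR2 n k s) {f : Fin n → Fin n}
    (hf0 : f ⟨0, hn⟩ = ⟨0, hn⟩) {q : Fin n}
    (hfix : ∀ j : Fin (k * n), (j : ℕ) < k * q → f (s j) = s j) : f q = q := by
  rcases Nat.eq_zero_or_pos q with hq | hq
  · rwa [show q = ⟨0, hn⟩ from Fin.ext hq]
  · obtain ⟨j, hj, hsj⟩ := h q hq (by omega)
    rw [← Fin.ext hsj]
    exact hfix j hj

lemma eq_and_apply_eq_self_of_commute (hn : 1 ≤ n) (h1 : RuleR1 n k s) (h2 : RuleR2 n k s)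
    (h1' : RuleR1 n k s') {f : Fin n → Fin n} (hf_inj : Function.Injective f)
    (hf0 : f ⟨0, hn⟩ = ⟨0, hn⟩)
    (hf : ∀ (q : Fin n) (σ : Fin k), f (stringDelta s q σ) = stringDelta s' (f q) σ)
    (i : Fin (k * n)) : s i = s' i ∧ f (s i) = s i := by
  induction i using WellFoundedLT.induction with
  | _ i ih =>
  obtain ⟨q, σ, hqi, hδ⟩ := exists_stringDelta_eq i
  have hfq : f q = q := h2.apply_eq_self hn hf0 fun j hj => (ih j (by omega)).2
  have hfi : f (s i) = s' i := by simpa only [hδ, hfq] using hf q σ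
  suffices hfix : f (s i) = s i from ⟨hfix.symm.trans hfi, hfix⟩
  by_contra hne
  have hne' : f (s' i) ≠ s' i := fun h => hne (by rwa [hf_inj (hfi.trans h.symm)])
  have hnew : ∀ v : Fin n, f v ≠ v → ∀ j < i, s j ≠ v :=
    fun v hv j hj hsj => hv (hsj ▸ (ih j hj).2)
  have hpos : ∀ v : Fin n, f v ≠ v → 1 ≤ (v : ℕ) :=
    fun v hv => Nat.one_le_iff_ne_zero.2 fun h0 =>
      hv (by rwa [show v = ⟨0, hn⟩ from Fin.ext h0])
  rcases lt_trichotomy (s i) (s' i) with hlt | heq | hgt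
  · obtain ⟨j, hj, hsj⟩ := h1'.exists_lt_eq (hpos _ hne) hlt
    exact hnew _ hne j hj ((ih j hj).1.trans (Fin.ext hsj))
  · exact hne (hfi.trans heq.symm)
  · obtain ⟨j, hj, hsj⟩ := h1.exists_lt_eq (hpos _ hne') hgt
    exact hnew _ hne' j hj (Fin.ext hsj)
end

theorem stmt3_general (n k : ℕ) (hn : 1 ≤ n)
    (s s' : Fin (k * n) → Fin n)
    (h1 : RuleR1 n k s) (h2 : RuleR2 n k s)
    (h1' : RuleR1 n k s')
    (hne : s ≠ s') :
    ¬ ∃ f : Fin n ≃ Fin n, f ⟨0, hn⟩ = ⟨0, hn⟩ ∧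
        ∀ (q : Fin n) (σ : Fin k), f (stringDelta s q σ) = stringDelta s' (f q) σ := by
  rintro ⟨f, hf0, hf⟩
  exact hne (funext fun i => (eq_and_apply_eq_self_of_commute hn h1 h2 h1' f.injective hf0 hf i).1)

/-- Two distinct strings satisfying (R1) and (R2) yield non-isomorphic
automaton structures (state set `{0,…,n-1}`, initial state `0`,
transitions `δ(q,σ_j) = s_{kq+j}` and `δ'(q,σ_j) = s'_{kq+j}`). -/
theorem stmt3 (n k : ℕ) (hn : 1 ≤ n) (hk : 1 ≤ k)
    (s s' : Fin (k * n) → Fin n)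
    (h1 : RuleR1 n k s) (h2 : RuleR2 n k s)
    (h1' : RuleR1 n k s') (h2' : RuleR2 n k s')
    (hne : s ≠ s') :
    ¬ ∃ f : Fin n ≃ Fin n, f ⟨0, hn⟩ = ⟨0, hn⟩ ∧
        ∀ (q : Fin n) (σ : Fin k), f (stringDelta s q σ) = stringDelta s' (f q) σ :=
  stmt3_general n k hn s s' h1 h2 h1' hne
end

section
/- For all integers n ≥ 1 and k ≥ 1, the number F_{k,n} of sequences of integers (f_j)_{j∈[1,n−1]} with 0 ≤ f_1, f_{j−1} < f_j for all j ∈ [2,n−1], and f_m < km for all m ∈ [1,n−1], equals the generalised Fuss–Catalan number C_n^{(k)} = binom(kn, n) / ((k−1)n + 1). Equivalently, Σ_{f_1=0}^{k−1} Σ_{f_2=f_1+1}^{2k−1} ⋯ Σ_{f_{n−1}=f_{n−2}+1}^{k(n−1)−1} 1 = binom(kn,n)/((k−1)n+1). -/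
/-!
Read a subset `S ⊆ [0, L)` with `#S = n` and `L = k n + 1` as the walk that rises by `k` at the
times in `S` and falls by `1` at every time. Its periodic extension drops by exactly `1` per
period, so exactly one of the `L` cyclic rotations of `S`, the one starting at the first minimum
of the walk in a period, keeps the walk nonnegative for a whole period (cycle lemma); call it a
ballot set. Double counting pairs (subset, rotation) gives `binom(kn+1, n) = (kn+1) · #ballot`,
i.e. `binom(kn, n) = ((k-1)n+1) · #ballot`. Listed increasingly, a ballot set is
`0 = s₀ < s₁ < ⋯ < s_{n-1}` with `s_j ≤ kj`, and `f_j = s_j - 1` is a flag sequence.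
-/

open Finset

/-- A flag sequence for `n` and `k`, indexed by `Fin (n-1)` (position `j-1`
holding the flag `f_j`, `j ∈ [1, n-1]`): a strictly increasing sequence with
`f_j < k*j` for all `j ∈ [1, n-1]`.  (All such values lie below `k*(n-1)`.) -/
def IsFlagSeq (n k : ℕ) (f : Fin (n - 1) → Fin (k * (n - 1))) : Prop :=
  StrictMono f ∧ ∀ j : Fin (n - 1), (f j : ℕ) < k * ((j : ℕ) + 1)

theorem Finset.card_filter_lt_orderEmbOfFin {α : Type*} [LinearOrder α] {n : ℕ} (s : Finset α)
    (h : #s = n) (j : Fin n) : #{x ∈ s | x < s.orderEmbOfFin h j} = j := by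
  have hs : s = univ.image (s.orderEmbOfFin h) := (image_orderEmbOfFin_univ s h).symm
  calc #{x ∈ s | x < s.orderEmbOfFin h j}
      = #{x ∈ univ.image (s.orderEmbOfFin h) | x < s.orderEmbOfFin h j} := by rw [← hs]
    _ = j := by
      rw [filter_image, card_image_of_injective _ (s.orderEmbOfFin h).injective]
      simp [filter_gt_eq_Iio]

namespace FussCatalan

section CycleLemma

variable {P : ℕ → ℤ} {L : ℕ}

lemma forall_le_add_iff (hP : ∀ t, P (L + t) = P t - 1) {u : ℕ} (hu : u < L) :
    (∀ t < L, P u ≤ P (u + t)) ↔ ∀ v < L, P u ≤ P v ∧ (v < u → P u < P v) := by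
  constructor
  · intro h
    have hlt : ∀ v < u, P u < P v := fun v hv => by
      have := h (L + v - u) (by omega)
      rw [show u + (L + v - u) = L + v by omega, hP] at this
      omega
    refine fun v hv => ⟨?_, hlt v⟩
    rcases lt_or_ge v u with hvu | huv
    · exact (hlt v hvu).le
    · simpa [Nat.add_sub_cancel' huv] using h (v - u) (by omega)
  · intro h t ht
    rcases lt_or_ge (u + t) L with hlt | hge
    · exact (h _ hlt).1
    · have := (h (u + t - L) (by omega)).2 (by omega)
      rw [show u + t = L + (u + t - L) by omega, hP]
      omega

/-- The cycle lemma; the starting point `u` is the first minimum of `P` on `[0, L)`. -/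
theorem existsUnique_forall_le_add (hL : 0 < L) (hP : ∀ t, P (L + t) = P t - 1) :
    ∃! u, u < L ∧ ∀ t < L, P u ≤ P (u + t) := by
  obtain ⟨u, hu, hmin⟩ := (range L).exists_min_image (fun v => toLex (P v, v))
    (nonempty_range_iff.mpr hL.ne')
  rw [mem_range] at hu
  have hfirst : ∀ v < L, P u ≤ P v ∧ (v < u → P u < P v) := fun v hv => by
    have := hmin v (mem_range.mpr hv)
    rw [Prod.Lex.toLex_le_toLex] at this
    omega
  refine ⟨u, ⟨hu, (forall_le_add_iff hP hu).2 hfirst⟩, fun w ⟨hw, hgood⟩ => ?_⟩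
  have := hfirst w hw
  have := (forall_le_add_iff hP hw).1 hgood u hu
  omega

end CycleLemma

def prefixCount (L : ℕ) (S : Finset ℕ) (t : ℕ) : ℕ := #{i ∈ range t | i % L ∈ S}

def rotate (L u : ℕ) (S : Finset ℕ) : Finset ℕ := {y ∈ range L | (y + u) % L ∈ S}

/-- The walk rising by `k` at the times in `S` and falling by `1` at every time stays
nonnegative up to time `L - 1`. -/
def IsBallot (k L : ℕ) (S : Finset ℕ) : Prop := ∀ t < L, t ≤ k * prefixCount L S t

instance (k L : ℕ) : DecidablePred (IsBallot k L) :=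
  fun _ => inferInstanceAs (Decidable (∀ t < L, _))

variable {k L : ℕ} {S : Finset ℕ}

lemma prefixCount_of_le {t : ℕ} (ht : t ≤ L) : prefixCount L S t = #{x ∈ S | x < t} := by
  unfold prefixCount
  congr 1
  ext i
  simp only [mem_filter, mem_range]
  constructor
  · rintro ⟨hi, hiS⟩
    exact ⟨by rwa [Nat.mod_eq_of_lt (by omega)] at hiS, hi⟩
  · rintro ⟨hiS, hi⟩
    exact ⟨hi, by rwa [Nat.mod_eq_of_lt (by omega)]⟩

lemma prefixCount_self (hS : S ⊆ range L) : prefixCount L S L = #S := by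
  rw [prefixCount_of_le le_rfl, filter_true_of_mem fun x hx => mem_range.mp (hS hx)]

lemma prefixCount_period_add (hS : S ⊆ range L) (t : ℕ) :
    prefixCount L S (L + t) = #S + prefixCount L S t := by
  rw [← prefixCount_self hS]
  simp only [prefixCount, card_filter, sum_range_add, Nat.add_mod_left]

lemma prefixCount_add (hL : 0 < L) (S : Finset ℕ) (u t : ℕ) :
    prefixCount L S (u + t) = prefixCount L S u + prefixCount L (rotate L u S) t := by
  simp only [prefixCount, card_filter, sum_range_add]
  congr 1
  refine sum_congr rfl fun i _ => ?_
  simp [rotate, Nat.mod_lt _ hL, add_comm u]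

lemma rotate_subset (L u : ℕ) (S : Finset ℕ) : rotate L u S ⊆ range L := filter_subset _ _

lemma card_rotate (hL : 0 < L) (hS : S ⊆ range L) (u : ℕ) : #(rotate L u S) = #S := by
  have := prefixCount_add hL S u L
  rw [add_comm, prefixCount_period_add hS, prefixCount_self (rotate_subset L u S)] at this
  omega

lemma rotate_rotate (hL : 0 < L) (u v : ℕ) (S : Finset ℕ) :
    rotate L v (rotate L u S) = rotate L (u + v) S := by
  ext y
  simp [rotate, Nat.mod_lt _ hL, Nat.mod_add_mod, add_assoc, add_comm v]

lemma rotate_self (hS : S ⊆ range L) : rotate L L S = S := by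
  ext y
  simp only [rotate, mem_filter, mem_range, Nat.add_mod_right]
  constructor
  · rintro ⟨hy, hyS⟩
    rwa [Nat.mod_eq_of_lt hy] at hyS
  · intro hy
    have hyL := mem_range.mp (hS hy)
    exact ⟨hyL, by rwa [Nat.mod_eq_of_lt hyL]⟩

lemma rotate_mem_powersetCard {n : ℕ} (hL : 0 < L) (hS : S ∈ powersetCard n (range L)) (u : ℕ) :
    rotate L u S ∈ powersetCard n (range L) := by
  rw [mem_powersetCard] at hS ⊢
  exact ⟨rotate_subset L u S, by rw [card_rotate hL hS.1, hS.2]⟩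

lemma card_filter_rotate {n u : ℕ} (hL : 0 < L) (hu : u ≤ L) (p : Finset ℕ → Prop)
    [DecidablePred p] :
    #{S ∈ powersetCard n (range L) | p (rotate L u S)} =
      #{S ∈ powersetCard n (range L) | p S} := by
  have hinv : ∀ {v w}, v + w = L → ∀ S ∈ powersetCard n (range L), rotate L w (rotate L v S) = S :=
    fun hvw S hS => by rw [rotate_rotate hL, hvw, rotate_self (mem_powersetCard.mp hS).1]
  refine card_nbij' (rotate L u) (rotate L (L - u)) (fun S hS => ?_) (fun S hS => ?_)
    (fun S hS => hinv (by omega) S (mem_filter.mp hS).1)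
    (fun S hS => hinv (by omega) S (mem_filter.mp hS).1)
  · simp only [mem_coe, mem_filter] at hS ⊢
    exact ⟨rotate_mem_powersetCard hL hS.1 u, hS.2⟩
  · simp only [mem_coe, mem_filter] at hS ⊢
    refine ⟨rotate_mem_powersetCard hL hS.1 _, ?_⟩
    rw [hinv (by omega) S hS.1]
    exact hS.2

lemma isBallot_rotate_iff (hL : 0 < L) (u : ℕ) :
    IsBallot k L (rotate L u S) ↔
      ∀ t < L, (k * prefixCount L S u - u : ℤ) ≤ k * prefixCount L S (u + t) - ↑(u + t) := by
  refine forall₂_congr fun t _ => ?_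
  rw [prefixCount_add hL]
  push_cast
  constructor <;> intro h <;> linarith

lemma card_filter_isBallot_rotate (hS : S ⊆ range L) (hL : L = k * #S + 1) :
    #{u ∈ range L | IsBallot k L (rotate L u S)} = 1 := by
  have hL0 : 0 < L := by omega
  obtain ⟨u, hu, huniq⟩ := existsUnique_forall_le_add (P := fun t => k * prefixCount L S t - t)
    hL0 fun t => by
      simp only [prefixCount_period_add hS]
      push_cast
      rw [hL]
      push_cast
      ring
  rw [card_eq_one]
  refine ⟨u, ext fun v => ?_⟩
  simp only [mem_filter, mem_range, mem_singleton, isBallot_rotate_iff hL0]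
  exact ⟨huniq v, fun h => h ▸ hu⟩

theorem choose_eq_mul_card_isBallot (k n : ℕ) :
    (k * n + 1).choose n =
      (k * n + 1) * #{S ∈ powersetCard n (range (k * n + 1)) | IsBallot k (k * n + 1) S} := by
  set L := k * n + 1
  calc L.choose n
      = ∑ S ∈ powersetCard n (range L), #{u ∈ range L | IsBallot k L (rotate L u S)} := by
        rw [← card_range L, ← card_powersetCard, card_eq_sum_ones, card_range]
        refine sum_congr rfl fun S hS => ?_
        obtain ⟨hSL, hcard⟩ := mem_powersetCard.mp hS
        rw [card_filter_isBallot_rotate hSL (by rw [hcard])]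
    _ = ∑ u ∈ range L, #{S ∈ powersetCard n (range L) | IsBallot k L (rotate L u S)} := by
        simp only [card_filter]
        exact sum_comm
    _ = ∑ u ∈ range L, #{S ∈ powersetCard n (range L) | IsBallot k L S} :=
        sum_congr rfl fun u hu => card_filter_rotate (by omega) (mem_range.mp hu).le _
    _ = L * #{S ∈ powersetCard n (range L) | IsBallot k L S} := by
        rw [sum_const, card_range, smul_eq_mul]

theorem choose_eq_card_isBallot_mul (hk : 1 ≤ k) (n : ℕ) :
    (k * n).choose n =
      #{S ∈ powersetCard n (range (k * n + 1)) | IsBallot k (k * n + 1) S} * ((k - 1) * n + 1) := by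
  have hsub : k * n + 1 - n = (k - 1) * n + 1 := by
    obtain ⟨k, rfl⟩ := Nat.exists_eq_add_of_le' hk
    rw [Nat.add_sub_cancel, add_mul, one_mul]
    omega
  have := Nat.choose_mul_succ_eq (k * n) n
  rw [choose_eq_mul_card_isBallot, hsub] at this
  apply Nat.eq_of_mul_eq_mul_right (by positivity : 0 < k * n + 1)
  rw [this]
  ring

lemma orderEmbOfFin_le_of_isBallot {n : ℕ} (hS : S ⊆ range L) (h : #S = n)
    (hb : IsBallot k L S) (j : Fin n) : S.orderEmbOfFin h j ≤ k * j := by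
  have hjL : S.orderEmbOfFin h j < L := mem_range.mp (hS (S.orderEmbOfFin_mem h j))
  have := hb _ hjL
  rwa [prefixCount_of_le hjL.le, card_filter_lt_orderEmbOfFin] at this

lemma isBallot_of_orderEmbOfFin_le {n : ℕ} (h : #S = n)
    (hle : ∀ j, S.orderEmbOfFin h j ≤ k * j) : IsBallot k (k * n + 1) S := by
  intro t ht
  rw [prefixCount_of_le ht.le]
  set c := #{x ∈ S | x < t}
  obtain hc | hc := lt_or_ge c n
  · -- the `c`-th smallest element of `S` is the first one that is `≥ t`
    refine le_trans (not_lt.mp fun hlt => ?_) (hle ⟨c, hc⟩)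
    have hsub : insert (S.orderEmbOfFin h ⟨c, hc⟩) {x ∈ S | x < S.orderEmbOfFin h ⟨c, hc⟩} ⊆
        {x ∈ S | x < t} := by
      intro x hx
      simp only [mem_insert, mem_filter] at hx ⊢
      rcases hx with rfl | ⟨hxS, hx⟩
      · exact ⟨S.orderEmbOfFin_mem h _, hlt⟩
      · exact ⟨hxS, hx.trans hlt⟩
    have := card_le_card hsub
    rw [card_insert_of_notMem (by simp), card_filter_lt_orderEmbOfFin, Fin.val_mk] at this
    omega
  · calc t ≤ k * n := by omega
      _ ≤ k * c := Nat.mul_le_mul_left k hc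

lemma mem_filter_isBallot_iff {n : ℕ} :
    S ∈ {S ∈ powersetCard n (range (k * n + 1)) | IsBallot k (k * n + 1) S} ↔
      ∃ h : #S = n, ∀ j, S.orderEmbOfFin h j ≤ k * j := by
  simp only [mem_filter, mem_powersetCard]
  constructor
  · rintro ⟨⟨hS, h⟩, hb⟩
    exact ⟨h, orderEmbOfFin_le_of_isBallot hS h hb⟩
  · rintro ⟨h, hle⟩
    refine ⟨⟨fun x hx => ?_, h⟩, isBallot_of_orderEmbOfFin_le h hle⟩
    rw [← mem_coe, ← range_orderEmbOfFin S h] at hx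
    obtain ⟨j, rfl⟩ := hx
    have := hle j
    have : k * j ≤ k * n := Nat.mul_le_mul_left k j.isLt.le
    exact mem_range.mpr (by omega)

lemma pos_apply_succ {m : ℕ} (e : Fin (m + 1) ↪o ℕ) (j : Fin m) : 0 < e j.succ :=
  (Nat.zero_le _).trans_lt (e.strictMono j.succ_pos)

def flagSeqEquiv (m k : ℕ) :
    {f : Fin m → Fin (k * m) // IsFlagSeq (m + 1) k f} ≃
      {e : Fin (m + 1) ↪o ℕ // ∀ j, e j ≤ k * j} where
  toFun f := ⟨OrderEmbedding.ofStrictMono (Fin.cons 0 fun j => (f.1 j : ℕ) + 1)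
      (Fin.strictMono_cons.2 ⟨fun _ => Nat.succ_pos _, fun _ _ hab => Nat.succ_lt_succ (f.2.1 hab)⟩),
    Fin.cases (by simp) fun j => by simpa using f.2.2 j⟩
  invFun e := ⟨fun j => ⟨e.1 j.succ - 1, by
      have := e.2 j.succ
      have := pos_apply_succ e.1 j
      have := Nat.mul_le_mul_left k j.isLt
      rw [Fin.val_succ] at *
      lia⟩,
    fun (a b : Fin m) hab => Fin.mk_lt_mk.2 <|
      Nat.sub_lt_sub_right (pos_apply_succ e.1 a) (e.1.strictMono (Fin.succ_lt_succ_iff.2 hab)),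
    fun (j : Fin m) => by
      have := e.2 j.succ
      have := pos_apply_succ e.1 j
      rw [Fin.val_succ] at *
      show e.1 j.succ - 1 < _
      lia⟩
  left_inv f := by
    ext j
    simp
  right_inv e := by
    ext j
    refine Fin.cases ?_ (fun j => ?_) j
    · simpa using (Nat.le_zero.mp (by simpa using e.2 0)).symm
    · have := pos_apply_succ e.1 j
      simp only [OrderEmbedding.coe_ofStrictMono, Fin.cons_succ]
      lia

theorem card_flagSeq {n : ℕ} (hn : 1 ≤ n) :
    Nat.card {f : Fin (n - 1) → Fin (k * (n - 1)) // IsFlagSeq n k f} =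
      #{S ∈ powersetCard n (range (k * n + 1)) | IsBallot k (k * n + 1) S} := by
  obtain ⟨m, rfl⟩ := Nat.exists_eq_add_of_le' hn
  rw [← Nat.card_eq_finsetCard]
  exact Nat.card_congr <| (flagSeqEquiv m k).trans <|
    ((Set.powersetCard.ofFinEmbEquiv.symm.subtypeEquiv fun _ => Iff.rfl).symm.trans
      (Equiv.subtypeSubtypeEquivSubtypeExists _ _)).trans
    (Equiv.subtypeEquivRight fun S => mem_filter_isBallot_iff.symm)

end FussCatalan

/-- The number `F_{k,n}` of flag sequences `(f_j)_{j∈[1,n-1]}` (nonnegative,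
strictly increasing, with `f_m < k*m`) equals the generalised Fuss–Catalan
number `C_n^{(k)} = binom(kn, n) / ((k-1)n + 1)`; moreover `(k-1)n + 1`
divides `binom(kn, n)`. -/
theorem stmt5 (n k : ℕ) (hn : 1 ≤ n) (hk : 1 ≤ k) :
    Nat.card {f : Fin (n - 1) → Fin (k * (n - 1)) // IsFlagSeq n k f} =
      (k * n).choose n / ((k - 1) * n + 1) ∧
    ((k - 1) * n + 1) ∣ (k * n).choose n := by
  rw [FussCatalan.card_flagSeq hn, FussCatalan.choose_eq_card_isBallot_mul hk,
    Nat.mul_div_cancel _ (Nat.succ_pos _)]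
  exact ⟨rfl, Dvd.intro_left _ rfl⟩
end

section
/- For all integers n ≥ 1 and k ≥ 1, there is a bijection between the set of k-ary trees with n internal nodes and the set of flag sequences (f_j)_{j∈[1,n−1]} for n and k. Explicitly, encoding a k-ary tree with n internal nodes by the bitmap of length kn obtained from a breadth-first left-to-right traversal (omitting the root, writing 1 for each internal node and 0 for each external node), the map sending the tree to the sequence of positions of the 1's in its bitmap is a bijection onto the set of flag sequences. -/
/-- A `k`-ary tree: either an external node (leaf) or an internal node with an
ordered sequence of `k` `k`-ary subtrees. -/
inductive KTree (k : ℕ) where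
  | leaf : KTree k
  | node : (Fin k → KTree k) → KTree k

/-- Number of internal nodes of a `k`-ary tree. -/
def internalCount {k : ℕ} : KTree k → ℕ
  | .leaf => 0
  | .node ts => 1 + ∑ i : Fin k, internalCount (ts i)

/-- Total number of nodes of a `k`-ary tree. -/
def totalCount {k : ℕ} : KTree k → ℕ
  | .leaf => 1
  | .node ts => 1 + ∑ i : Fin k, totalCount (ts i)

/-- Breadth-first left-to-right traversal of a queue of trees, recording `1`
(`true`) for each internal node and `0` (`false`) for each external node;
children are enqueued left-to-right.  The first argument is fuel. -/
def bfsBitmapAux {k : ℕ} : ℕ → List (KTree k) → List Bool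
  | 0, _ => []
  | _ + 1, [] => []
  | fuel + 1, .leaf :: rest => false :: bfsBitmapAux fuel rest
  | fuel + 1, .node ts :: rest =>
      true :: bfsBitmapAux fuel (rest ++ (List.finRange k).map ts)

/-- The bitmap of a `k`-ary tree: breadth-first left-to-right traversal
omitting the root, writing `1` for internal and `0` for external nodes. -/
def treeBitmap {k : ℕ} : KTree k → List Bool
  | .leaf => []
  | .node ts => bfsBitmapAux (∑ i : Fin k, totalCount (ts i)) ((List.finRange k).map ts)

/-- The (increasing) list of positions of the `1`s in a bitmap. -/
def onesPositions (l : List Bool) : List ℕ :=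
  (List.range l.length).filter (fun i => l.getD i false)

/-- A flag sequence for `n` and `k`, as an increasing list of naturals of
length `n - 1` whose `j`-th entry (`0`-based) is `< k*(j+1)`. -/
def IsFlagList (n k : ℕ) (f : List ℕ) : Prop :=
  f.length = n - 1 ∧ f.Chain' (· < ·) ∧ ∀ j < f.length, f.getD j 0 < k * (j + 1)

/-!
Reading the bitmap of a queue of `k`-ary trees breadth-first, every bit dequeues one tree and
every `1` also enqueues `k` children. Hence the bitmaps of queues of `m` trees are exactly the
bit strings along which the queue length, started at `m`, stays positive before each bit and
ends at `0`; the queue is recovered by reading the bitmap from the end, the children of a tree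
being the last `k` entries of the later queue. In terms of the positions of the `1`s, the queue
condition says that the `j`-th `1` (from `0`) lies before position `m + k j`; for the queue of
the `k` children of the root this is the flag condition `f_j < k (j + 1)`.
-/

open Set

lemma List.exists_map_finRange_eq {α : Type*} {k : ℕ} {l : List α} (hl : l.length = k) :
    ∃ f : Fin k → α, (List.finRange k).map f = l := by
  subst hl
  exact ⟨fun i => l[(i : ℕ)], by rw [← List.ofFn_eq_map, List.ofFn_getElem]⟩

lemma List.map_finRange_injective {α : Type*} {k : ℕ} :
    Function.Injective fun f : Fin k → α => (List.finRange k).map f := by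
  intro f g h
  apply List.ofFn_injective
  simpa only [List.ofFn_eq_map] using h

/-- `m` is the length of the breadth-first queue: each bit dequeues a tree and each `1` enqueues
its `k` children, so the queue must be nonempty before every bit and empty at the end. -/
def IsBfsBitmap (k : ℕ) : ℕ → List Bool → Prop
  | m, [] => m = 0
  | m, false :: l => 0 < m ∧ IsBfsBitmap k (m - 1) l
  | m, true :: l => 0 < m ∧ IsBfsBitmap k (m - 1 + k) l

@[simp] lemma onesPositions_nil : onesPositions [] = [] := rfl

@[simp] lemma onesPositions_cons (b : Bool) (l : List Bool) :
    onesPositions (b :: l) = (if b then [0] else []) ++ (onesPositions l).map (· + 1) := by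
  cases b <;> simp [onesPositions, List.range_succ_eq_map, List.filter_map, Function.comp_def]

lemma mem_onesPositions {l : List Bool} {i : ℕ} : i ∈ onesPositions l ↔ l.getD i false := by
  simp only [onesPositions, List.mem_filter, List.mem_range, and_iff_right_iff_imp]
  intro h
  by_contra hi
  simp [List.getElem?_eq_none (not_lt.mp hi)] at h

lemma length_onesPositions (l : List Bool) : (onesPositions l).length = l.count true := by
  induction l with
  | nil => rfl
  | cons b l ih => cases b <;> simp [ih]

lemma pairwise_onesPositions (l : List Bool) : (onesPositions l).Pairwise (· < ·) :=
  List.pairwise_lt_range.filter _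

lemma eq_of_onesPositions_eq {l l' : List Bool} (hl : l.length = l'.length)
    (h : onesPositions l = onesPositions l') : l = l' := by
  refine List.ext_getElem hl fun i hi hi' => ?_
  have := congrArg (i ∈ ·) h
  simp only [mem_onesPositions, List.getD_eq_getElem _ _ hi, List.getD_eq_getElem _ _ hi'] at this
  exact Bool.eq_iff_iff.mpr this.to_iff

lemma isBfsBitmap_iff {k : ℕ} : ∀ {m : ℕ} {l : List Bool}, IsBfsBitmap k m l ↔
    l.length = m + k * l.count true ∧
      ∀ j (hj : j < (onesPositions l).length), (onesPositions l)[j] < m + k * j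
  | m, [] => by simp [IsBfsBitmap, eq_comm]
  | m, false :: l => by
    simp only [IsBfsBitmap, isBfsBitmap_iff, onesPositions_cons, Bool.false_eq_true,
      if_false, List.nil_append, List.length_map, List.getElem_map, List.length_cons,
      List.count_cons_of_ne Bool.false_ne_true]
    constructor
    · rintro ⟨hm, hlen, hP⟩
      exact ⟨by omega, fun j hj => by have := hP j hj; omega⟩
    · rintro ⟨hlen, hP⟩
      -- with an empty queue, the next `1` would violate its bound
      have hm : 0 < m := by
        rcases Nat.eq_zero_or_pos (l.count true) with hc | hc
        · rw [hc, mul_zero] at hlen; omega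
        · have := hP 0 (by rwa [length_onesPositions]); omega
      exact ⟨hm, by omega, fun j hj => by have := hP j hj; omega⟩
  | m, true :: l => by
    simp only [IsBfsBitmap, isBfsBitmap_iff, onesPositions_cons, if_true, List.singleton_append,
      List.length_cons, List.length_map, List.count_cons_self, mul_add, mul_one]
    constructor
    · rintro ⟨hm, hlen, hP⟩
      refine ⟨by omega, fun j hj => ?_⟩
      cases j with
      | zero => simpa using hm
      | succ j =>
        have := hP j (by omega)
        simp only [List.getElem_cons_succ, List.getElem_map, mul_add, mul_one]
        omega
    · rintro ⟨hlen, hP⟩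
      have hm : 0 < m := by simpa using hP 0 (by omega)
      refine ⟨hm, by omega, fun j hj => ?_⟩
      have := hP (j + 1) (by omega)
      simp only [List.getElem_cons_succ, List.getElem_map, mul_add, mul_one] at this
      omega

lemma onesPositions_map_range_decide_mem {N : ℕ} {f : List ℕ} (hf : f.Pairwise (· < ·))
    (hN : ∀ x ∈ f, x < N) : onesPositions ((List.range N).map fun i => decide (i ∈ f)) = f := by
  refine (pairwise_onesPositions _).eq_of_mem_iff hf fun i => ?_
  rw [mem_onesPositions]
  by_cases hi : i < N
  · simp [hi]
  · simpa [hi] using fun h => hi (hN i h)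

lemma onesPositions_bijOn (n k : ℕ) :
    BijOn onesPositions {l | IsBfsBitmap k k l ∧ l.count true = n - 1}
      {f | IsFlagList n k f} := by
  refine ⟨?_, ?_, ?_⟩
  · rintro l ⟨hl, hc⟩
    refine ⟨by rw [length_onesPositions, hc],
      List.isChain_iff_pairwise.mpr (pairwise_onesPositions l), fun j hj => ?_⟩
    rw [List.getD_eq_getElem _ _ hj, mul_add, mul_one, add_comm]
    exact (isBfsBitmap_iff.mp hl).2 j hj
  · rintro l ⟨hl, hc⟩ l' ⟨hl', hc'⟩ h
    refine eq_of_onesPositions_eq ?_ h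
    rw [(isBfsBitmap_iff.mp hl).1, (isBfsBitmap_iff.mp hl').1, hc, hc']
  · rintro f ⟨hlen, hchain, hf⟩
    have hf' : ∀ j (hj : j < f.length), f[j] < k + k * j := fun j hj => by
      have := hf j hj
      rwa [List.getD_eq_getElem _ _ hj, mul_add, mul_one, add_comm] at this
    have hbound : ∀ x ∈ f, x < k + k * (n - 1) := by
      intro x hx
      obtain ⟨j, hj, rfl⟩ := List.getElem_of_mem hx
      have : k * j ≤ k * (n - 1) := Nat.mul_le_mul_left k (by omega)
      linarith [hf' j hj]
    set l := (List.range (k + k * (n - 1))).map fun i => decide (i ∈ f)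
    have hones : onesPositions l = f :=
      onesPositions_map_range_decide_mem (List.isChain_iff_pairwise.mp hchain) hbound
    have hcount : l.count true = n - 1 := by rw [← length_onesPositions, hones, hlen]
    refine ⟨l, ⟨isBfsBitmap_iff.mpr ⟨by simp [l, hcount], ?_⟩, hcount⟩, hones⟩
    simpa only [hones] using hf'

namespace KTree

variable {k : ℕ}

def children : KTree k → List (KTree k)
  | leaf => []
  | node ts => (List.finRange k).map ts

def queueSize (q : List (KTree k)) : ℕ := (q.map totalCount).sum

def queueInternalCount (q : List (KTree k)) : ℕ := (q.map internalCount).sum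

def bfsBitmap (q : List (KTree k)) : List Bool := bfsBitmapAux (queueSize q) q

@[simp] lemma queueSize_cons (t : KTree k) (q : List (KTree k)) :
    queueSize (t :: q) = totalCount t + queueSize q := List.sum_cons

@[simp] lemma queueSize_append (q r : List (KTree k)) :
    queueSize (q ++ r) = queueSize q + queueSize r := by
  simp [queueSize]

@[simp] lemma queueSize_map_finRange (ts : Fin k → KTree k) :
    queueSize ((List.finRange k).map ts) = ∑ i, totalCount (ts i) := by
  rw [Fin.sum_univ_def, queueSize, List.map_map]; rfl

@[simp] lemma queueInternalCount_cons (t : KTree k) (q : List (KTree k)) :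
    queueInternalCount (t :: q) = internalCount t + queueInternalCount q := List.sum_cons

@[simp] lemma queueInternalCount_append (q r : List (KTree k)) :
    queueInternalCount (q ++ r) = queueInternalCount q + queueInternalCount r := by
  simp [queueInternalCount]

@[simp] lemma queueInternalCount_map_finRange (ts : Fin k → KTree k) :
    queueInternalCount ((List.finRange k).map ts) = ∑ i, internalCount (ts i) := by
  rw [Fin.sum_univ_def, queueInternalCount, List.map_map]; rfl

lemma queueSize_node_cons (ts : Fin k → KTree k) (q : List (KTree k)) :
    queueSize (node ts :: q) = queueSize (q ++ (List.finRange k).map ts) + 1 := by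
  simp [totalCount]; omega

@[simp] lemma bfsBitmap_leaf_cons (q : List (KTree k)) :
    bfsBitmap (leaf :: q) = false :: bfsBitmap q := by
  rw [bfsBitmap, queueSize_cons, totalCount, add_comm, bfsBitmapAux, bfsBitmap]

@[simp] lemma bfsBitmap_node_cons (ts : Fin k → KTree k) (q : List (KTree k)) :
    bfsBitmap (node ts :: q) = true :: bfsBitmap (q ++ (List.finRange k).map ts) := by
  rw [bfsBitmap, queueSize_node_cons, bfsBitmapAux, bfsBitmap]

lemma treeBitmap_eq_bfsBitmap_children (t : KTree k) : treeBitmap t = bfsBitmap t.children := by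
  cases t with
  | leaf => rfl
  | node ts => rw [treeBitmap, children, bfsBitmap, queueSize_map_finRange]

lemma isBfsBitmap_bfsBitmap : ∀ q : List (KTree k), IsBfsBitmap k q.length (bfsBitmap q)
  | [] => rfl
  | leaf :: q => by simpa [IsBfsBitmap] using isBfsBitmap_bfsBitmap q
  | node ts :: q => by
    simpa [IsBfsBitmap] using isBfsBitmap_bfsBitmap (q ++ (List.finRange k).map ts)
termination_by q => queueSize q
decreasing_by all_goals simp [totalCount] <;> omega

lemma count_bfsBitmap : ∀ q : List (KTree k), (bfsBitmap q).count true = queueInternalCount q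
  | [] => rfl
  | leaf :: q => by simpa [internalCount] using count_bfsBitmap q
  | node ts :: q => by
    simp [count_bfsBitmap (q ++ (List.finRange k).map ts), internalCount]; omega
termination_by q => queueSize q
decreasing_by all_goals simp [totalCount] <;> omega

lemma bfsBitmap_injective : ∀ q r : List (KTree k), q.length = r.length →
    bfsBitmap q = bfsBitmap r → q = r
  | [], [], _, _ => rfl
  | leaf :: q, leaf :: r, hl, h => by
    simp only [bfsBitmap_leaf_cons, List.cons.injEq, true_and] at h
    rw [bfsBitmap_injective q r (by simpa using hl) h]
  | node ts :: q, node us :: r, hl, h => by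
    simp only [bfsBitmap_node_cons, List.cons.injEq, true_and] at h
    have hqr : q.length = r.length := by simpa using hl
    obtain ⟨rfl, hts⟩ := List.append_inj (bfsBitmap_injective _ _ (by simp [hqr]) h) hqr
    rw [List.map_finRange_injective hts]
  | leaf :: _, node _ :: _, _, h | node _ :: _, leaf :: _, _, h => by simp at h
termination_by q => queueSize q
decreasing_by all_goals simp [totalCount] <;> omega

lemma exists_bfsBitmap_eq : ∀ {m : ℕ} {l : List Bool}, IsBfsBitmap k m l →
    ∃ q : List (KTree k), q.length = m ∧ bfsBitmap q = l
  | _, [], rfl => ⟨[], rfl, rfl⟩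
  | m, false :: l, ⟨hm, h⟩ => by
    obtain ⟨q, hq, rfl⟩ := exists_bfsBitmap_eq h
    exact ⟨leaf :: q, by simp; omega, bfsBitmap_leaf_cons q⟩
  | m, true :: l, ⟨hm, h⟩ => by
    obtain ⟨q, hq, rfl⟩ := exists_bfsBitmap_eq h
    -- the last `k` trees of the queue are the children of the tree dequeued first
    obtain ⟨ts, hts⟩ := List.exists_map_finRange_eq (k := k) (l := q.drop (m - 1)) (by simp; omega)
    refine ⟨node ts :: q.take (m - 1), by simp; omega, ?_⟩
    rw [bfsBitmap_node_cons, hts, List.take_append_drop]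

lemma bfsBitmap_bijOn (m c : ℕ) :
    BijOn bfsBitmap {q : List (KTree k) | q.length = m ∧ queueInternalCount q = c}
      {l | IsBfsBitmap k m l ∧ l.count true = c} := by
  refine ⟨?_, ?_, ?_⟩
  · rintro q ⟨rfl, rfl⟩
    exact ⟨isBfsBitmap_bfsBitmap q, count_bfsBitmap q⟩
  · rintro q ⟨hq, -⟩ r ⟨hr, -⟩ h
    exact bfsBitmap_injective q r (hq.trans hr.symm) h
  · rintro l ⟨hl, rfl⟩
    obtain ⟨q, hq, rfl⟩ := exists_bfsBitmap_eq hl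
    exact ⟨q, ⟨hq, (count_bfsBitmap q).symm⟩, rfl⟩

lemma children_bijOn {n : ℕ} (hn : 1 ≤ n) :
    BijOn children {t : KTree k | internalCount t = n}
      {q | q.length = k ∧ queueInternalCount q = n - 1} := by
  refine ⟨?_, ?_, ?_⟩
  · rintro (_ | ts) (ht : internalCount _ = n)
    · simp [internalCount] at ht; omega
    · simp [children, internalCount] at ht ⊢; omega
  · rintro (_ | ts) (ht : internalCount _ = n) (_ | us) (hu : internalCount _ = n) h
    · rfl
    all_goals simp only [internalCount] at ht hu
    · omega
    · omega
    · rw [List.map_finRange_injective h]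
  · rintro q ⟨hq, hc⟩
    obtain ⟨ts, rfl⟩ := List.exists_map_finRange_eq hq
    refine ⟨node ts, ?_, rfl⟩
    simp only [queueInternalCount_map_finRange] at hc
    simp [internalCount]; omega

end KTree

theorem stmt6_general (n k : ℕ) (hn : 1 ≤ n) :
    Set.BijOn (fun t => onesPositions (treeBitmap t))
      {t : KTree k | internalCount t = n} {f : List ℕ | IsFlagList n k f} := by
  refine ((onesPositions_bijOn n k).comp
    ((KTree.bfsBitmap_bijOn k (n - 1)).comp (KTree.children_bijOn hn))).congr fun t _ => ?_
  simp [KTree.treeBitmap_eq_bfsBitmap_children]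

/-- The map sending a `k`-ary tree with `n` internal nodes to the sequence of
positions of the `1`s in its bitmap is a bijection from the set of `k`-ary
trees with `n` internal nodes onto the set of flag sequences for `n` and `k`. -/
theorem stmt6 (n k : ℕ) (hn : 1 ≤ n) (hk : 1 ≤ k) :
    Set.BijOn (fun t => onesPositions (treeBitmap t))
      {t : KTree k | internalCount t = n} {f : List ℕ | IsFlagList n k f} :=
  stmt6_general n k hn
end

section
/- Fix integers n ≥ 2 and k ≥ 1 and a flag sequence (f_j)_{j∈[1,n−1]} for n and k. The number of strings (s_i)_{i∈[0,kn−1]} with s_i ∈ [0,n−1] satisfying rules (R1) and (R2) whose sequence of first-occurrence indices of the values 1,…,n−1 is exactly (f_j)_{j∈[1,n−1]} equals ∏_{i=2}^{n} i^{f_i−f_{i−1}−1}, where f_n = kn. Equivalently, such strings are exactly those with s_i = 0 for i < f_1, s_{f_j} = j for j ∈ [1,n−1], s_i ∈ [0,j] for f_j < i < f_{j+1} (j ∈ [1,n−2]), and s_i ∈ [0,n−1] for i > f_{n−1}. -/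
/-- `f` is the sequence of first-occurrence indices of the values `1, …, n-1`
in the string `s`:  for each `j ∈ [1, n-1]`, `f j < k*n`, `s (f j) = j`, and
no earlier position carries the value `j`. -/
def HasFlags (n k : ℕ) (s : Fin (k * n) → Fin n) (f : ℕ → ℕ) : Prop :=
  ∀ j : ℕ, 1 ≤ j → j ≤ n - 1 → ∃ hj : f j < k * n,
    (s ⟨f j, hj⟩ : ℕ) = j ∧ ∀ i : Fin (k * n), (i : ℕ) < f j → (s i : ℕ) ≠ j

/-!
A string satisfies (R1), (R2) and has flags `f` exactly when every position `i` satisfies the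
local condition `FlagAllowed n f i (s i)`: in both descriptions the value `m ≥ 1` cannot occur
before position `f m`, and (R1), (R2) are then witnessed by the flags themselves. The local
conditions are independent, leaving one choice before `f 1` and at each flag, and `j + 1`
choices strictly between `f j` and `f (j + 1)`; multiplying block by block gives the product.
-/

theorem Fin.card_subtype_val_eq {n c : ℕ} (hc : c < n) :
    Nat.card {v : Fin n // (v : ℕ) = c} = 1 :=
  Nat.card_eq_one_iff_unique.2
    ⟨⟨fun a b => Subtype.ext (Fin.ext (a.2.trans b.2.symm))⟩, ⟨⟨⟨c, hc⟩, rfl⟩⟩⟩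

theorem Fin.card_subtype_val_le {n t : ℕ} (ht : t < n) :
    Nat.card {v : Fin n // (v : ℕ) ≤ t} = t + 1 := by
  rw [Nat.card_congr ((Equiv.subtypeEquivRight fun v => Nat.lt_succ_iff.symm).trans
    (Fin.castLEquiv ht).symm), Nat.card_fin]

theorem exists_le_lt_add_one {α : Type*} [LinearOrder α] {f : ℕ → α} {a b : ℕ} {x : α}
    (hab : a ≤ b) (ha : f a ≤ x) (hb : x < f b) :
    ∃ t, a ≤ t ∧ t < b ∧ f t ≤ x ∧ x < f (t + 1) := by
  induction b, hab using Nat.le_induction with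
  | base => exact absurd ha (not_le.2 hb)
  | succ b hab ih =>
    rcases le_or_gt (f b) x with h | h
    · exact ⟨b, hab, b.lt_succ_self, h, hb⟩
    · obtain ⟨t, hat, htb, ht⟩ := ih h
      exact ⟨t, hat, htb.trans b.lt_succ_self, ht⟩

theorem prod_range_flag_eq_prod_pow {m : ℕ} {f : ℕ → ℕ} (g : ℕ → ℕ)
    (hf : StrictMonoOn f (Set.Icc 1 m)) (hm : 1 ≤ m) (hbefore : ∀ i < f 1, g i = 1)
    (hflag : ∀ t, 1 ≤ t → t < m → g (f t) = 1)
    (hgap : ∀ t, 1 ≤ t → t < m → ∀ i, f t < i → i < f (t + 1) → g i = t + 1) :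
    ∏ i ∈ Finset.range (f m), g i = ∏ j ∈ Finset.Icc 2 m, j ^ (f j - f (j - 1) - 1) := by
  suffices ∀ l, 1 ≤ l → l ≤ m →
      ∏ i ∈ Finset.range (f l), g i = ∏ j ∈ Finset.Icc 2 l, j ^ (f j - f (j - 1) - 1) from
    this m hm le_rfl
  intro l hl
  induction l, hl using Nat.le_induction with
  | base =>
    intro _
    rw [Finset.prod_eq_one fun i hi => hbefore i (Finset.mem_range.1 hi)]
    rfl
  | succ l hl ih =>
    intro hlm
    have hlt : f l < f (l + 1) := hf ⟨hl, by omega⟩ ⟨by omega, hlm⟩ l.lt_succ_self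
    have hgap_const : ∀ i ∈ Finset.Ico (f l + 1) (f (l + 1)), g i = l + 1 := fun i hi =>
      hgap l hl hlm i (Finset.mem_Ico.1 hi).1 (Finset.mem_Ico.1 hi).2
    rw [← Finset.prod_range_mul_prod_Ico g hlt.le, ih (by omega),
      Finset.prod_eq_prod_Ico_succ_bot hlt, hflag l hl hlm, one_mul,
      Finset.prod_congr rfl hgap_const, Finset.prod_const, Nat.card_Ico,
      Finset.prod_Icc_succ_top (by omega), Nat.add_sub_cancel, Nat.sub_add_eq]

def FlagAllowed (n : ℕ) (f : ℕ → ℕ) (i v : ℕ) : Prop :=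
  (i < f 1 → v = 0) ∧
  (∀ j : ℕ, 1 ≤ j → j ≤ n - 1 → i = f j → v = j) ∧
  (∀ j : ℕ, 1 ≤ j → j ≤ n - 2 → f j < i → i < f (j + 1) → v ≤ j)

section FlagAllowed

variable {n : ℕ} {f : ℕ → ℕ}

theorem FlagAllowed.flag_le {i m : ℕ} (h : FlagAllowed n f i m) (hm : 1 ≤ m)
    (hmn : m ≤ n - 1) : f m ≤ i := by
  by_contra! hi
  obtain ⟨hzero, hflag, hgap⟩ := h
  rcases lt_or_ge i (f 1) with h1 | h1
  · exact absurd (hzero h1) (by omega)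
  obtain ⟨t, ht1, htm, hti, hit⟩ := exists_le_lt_add_one hm h1 hi
  rcases hti.lt_or_eq with hti | hti
  · have := hgap t ht1 (by omega) hti hit
    omega
  · have := hflag t ht1 (by omega) hti.symm
    omega

variable {k : ℕ} {s : Fin (k * n) → Fin n}

theorem HasFlags.flag_le (h : HasFlags n k s f) (i : Fin (k * n)) (hi : 1 ≤ (s i : ℕ)) :
    f (s i) ≤ i := by
  obtain ⟨-, -, hfirst⟩ := h (s i) hi (by omega)
  by_contra! hlt
  exact hfirst i hlt rfl

theorem HasFlags.flagAllowed (hf : MonotoneOn f (Set.Icc 1 (n - 1))) (h : HasFlags n k s f)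
    (i : Fin (k * n)) : FlagAllowed n f i (s i) := by
  have hsi : (s i : ℕ) ≤ n - 1 := by omega
  refine ⟨fun hi => ?_, fun j hj1 hjn hij => ?_, fun j hj1 hjn _ hi => ?_⟩
  · by_contra! hs
    have := hf ⟨le_rfl, by omega⟩ ⟨by omega, hsi⟩ (Nat.one_le_iff_ne_zero.2 hs)
    have := h.flag_le i (by omega)
    omega
  · obtain ⟨hj, hsj, -⟩ := h j hj1 hjn
    rwa [show i = ⟨f j, hj⟩ from Fin.ext hij]
  · by_contra! hs
    have := hf ⟨by omega, by omega⟩ ⟨by omega, hsi⟩ (show j + 1 ≤ s i by omega)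
    have := h.flag_le i (by omega)
    omega

theorem flag_lt_mul {j : ℕ} (hbound : ∀ m : ℕ, 1 ≤ m → m ≤ n - 1 → f m < k * m)
    (hj1 : 1 ≤ j) (hjn : j ≤ n - 1) : f j < k * n :=
  (hbound j hj1 hjn).trans_le (Nat.mul_le_mul_left k (by omega))

section FromFlagAllowed

variable (h : ∀ i : Fin (k * n), FlagAllowed n f i (s i))
include h

theorem val_apply_flag_of_flagAllowed {j : ℕ} (hj1 : 1 ≤ j) (hjn : j ≤ n - 1)
    (hj : f j < k * n) : (s ⟨f j, hj⟩ : ℕ) = j :=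
  (h ⟨f j, hj⟩).2.1 j hj1 hjn rfl

theorem hasFlags_of_flagAllowed (hbound : ∀ m : ℕ, 1 ≤ m → m ≤ n - 1 → f m < k * m) :
    HasFlags n k s f := by
  intro j hj1 hjn
  have hj := flag_lt_mul hbound hj1 hjn
  refine ⟨hj, val_apply_flag_of_flagAllowed h hj1 hjn hj, fun i hi hsi => ?_⟩
  have := (hsi ▸ h i).flag_le hj1 hjn
  omega

theorem ruleR1_of_flagAllowed (hf : StrictMonoOn f (Set.Icc 1 (n - 1))) : RuleR1 n k s := by
  intro m hm2 hmn i hsi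
  have hfm := (hsi ▸ h i).flag_le (by omega) hmn
  have hlt : f (m - 1) < f m := hf ⟨by omega, by omega⟩ ⟨by omega, hmn⟩ (by omega)
  have hj : f (m - 1) < k * n := by omega
  exact ⟨⟨f (m - 1), hj⟩, hlt.trans_le hfm,
    val_apply_flag_of_flagAllowed h (by omega) (by omega) hj⟩

theorem ruleR2_of_flagAllowed (hbound : ∀ m : ℕ, 1 ≤ m → m ≤ n - 1 → f m < k * m) :
    RuleR2 n k s := fun m hm1 hmn =>
  have hj := flag_lt_mul hbound hm1 hmn
  ⟨⟨f m, hj⟩, hbound m hm1 hmn, val_apply_flag_of_flagAllowed h hm1 hmn hj⟩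

end FromFlagAllowed

theorem ruleR1_and_ruleR2_and_hasFlags_iff (hf : StrictMonoOn f (Set.Icc 1 (n - 1)))
    (hbound : ∀ m : ℕ, 1 ≤ m → m ≤ n - 1 → f m < k * m) :
    RuleR1 n k s ∧ RuleR2 n k s ∧ HasFlags n k s f ↔
      ∀ i : Fin (k * n), FlagAllowed n f i (s i) :=
  ⟨fun ⟨_, _, h⟩ => h.flagAllowed hf.monotoneOn, fun h => ⟨ruleR1_of_flagAllowed h hf,
    ruleR2_of_flagAllowed h hbound, hasFlags_of_flagAllowed h hbound⟩⟩

section Count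

variable (hf : StrictMonoOn f (Set.Icc 1 (n - 1)))
include hf

theorem flagAllowed_iff_of_lt_flag_one {i v : ℕ} (hi : i < f 1) :
    FlagAllowed n f i v ↔ v = 0 := by
  refine ⟨fun h => h.1 hi, fun hv =>
    ⟨fun _ => hv, fun j hj1 hjn _ => ?_, fun j hj1 hjn _ _ => ?_⟩⟩
  all_goals
    have := hf.monotoneOn ⟨le_rfl, by omega⟩ ⟨hj1, by omega⟩ hj1
    omega

theorem flagAllowed_flag_iff {t v : ℕ} (ht1 : 1 ≤ t) (htn : t ≤ n - 1) :
    FlagAllowed n f (f t) v ↔ v = t := by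
  refine ⟨fun h => h.2.1 t ht1 htn rfl, fun hv => ⟨fun h1 => ?_, fun j hj1 hjn hij => ?_,
    fun j hj1 hjn hjt htj => ?_⟩⟩
  · have := hf.monotoneOn ⟨le_rfl, by omega⟩ ⟨ht1, htn⟩ ht1
    omega
  · rw [hv, hf.injOn ⟨hj1, hjn⟩ ⟨ht1, htn⟩ hij.symm]
  · have := (hf.lt_iff_lt ⟨hj1, by omega⟩ ⟨ht1, htn⟩).1 hjt
    have := (hf.lt_iff_lt ⟨ht1, htn⟩ ⟨by omega, by omega⟩).1 htj
    omega

theorem flagAllowed_iff_of_mem_Ioo {t i v : ℕ} (ht1 : 1 ≤ t) (htn : t ≤ n - 1) (hti : f t < i)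
    (hit : i < f (t + 1)) (hv : v < n) : FlagAllowed n f i v ↔ v ≤ t := by
  have hno_flag : ∀ j, 1 ≤ j → j ≤ n - 1 → f t < f j → f j ≤ i → False := by
    intro j hj1 hjn htj hij
    have := (hf.lt_iff_lt ⟨ht1, htn⟩ ⟨hj1, hjn⟩).1 htj
    have := hf.monotoneOn ⟨by omega, by omega⟩ ⟨hj1, hjn⟩ (show t + 1 ≤ j by omega)
    omega
  refine ⟨fun h => ?_, fun hvt => ⟨fun h1 => ?_, fun j hj1 hjn hij => ?_,
    fun j hj1 hjn hji hij => ?_⟩⟩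
  · rcases lt_or_ge t (n - 1) with htn' | htn'
    · exact h.2.2 t ht1 (by omega) hti hit
    · omega
  · have := hf.monotoneOn ⟨le_rfl, by omega⟩ ⟨ht1, htn⟩ ht1
    omega
  · exact (hno_flag j hj1 hjn (by omega) hij.ge).elim
  · obtain hjt | rfl | htj := lt_trichotomy j t
    · have := hf.monotoneOn ⟨by omega, by omega⟩ ⟨ht1, htn⟩ (show j + 1 ≤ t by omega)
      omega
    · exact hvt
    · exact (hno_flag j hj1 (by omega) ((hf.lt_iff_lt ⟨ht1, htn⟩ ⟨hj1, by omega⟩).2 htj)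
        hji.le).elim

theorem card_flagAllowed_of_lt_flag_one (hn : 0 < n) {i : ℕ} (hi : i < f 1) :
    Nat.card {v : Fin n // FlagAllowed n f i v} = 1 := by
  rw [Nat.card_congr (Equiv.subtypeEquivRight fun v => flagAllowed_iff_of_lt_flag_one hf hi)]
  exact Fin.card_subtype_val_eq hn

theorem card_flagAllowed_flag {t : ℕ} (ht1 : 1 ≤ t) (htn : t ≤ n - 1) :
    Nat.card {v : Fin n // FlagAllowed n f (f t) v} = 1 := by
  rw [Nat.card_congr (Equiv.subtypeEquivRight fun v => flagAllowed_flag_iff hf ht1 htn)]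
  exact Fin.card_subtype_val_eq (by omega)

theorem card_flagAllowed_of_mem_Ioo {t i : ℕ} (ht1 : 1 ≤ t) (htn : t ≤ n - 1) (hti : f t < i)
    (hit : i < f (t + 1)) : Nat.card {v : Fin n // FlagAllowed n f i v} = t + 1 := by
  rw [Nat.card_congr (Equiv.subtypeEquivRight fun v =>
    flagAllowed_iff_of_mem_Ioo hf ht1 htn hti hit v.isLt)]
  exact Fin.card_subtype_val_le (by omega)

end Count

end FlagAllowed

theorem strictMonoOn_Icc_of_flags {n k : ℕ} {f : ℕ → ℕ}
    (hmono : ∀ j : ℕ, 2 ≤ j → j ≤ n - 1 → f (j - 1) < f j)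
    (hbound : ∀ m : ℕ, 1 ≤ m → m ≤ n - 1 → f m < k * m) (hfn : f n = k * n) :
    StrictMonoOn f (Set.Icc 1 n) := by
  refine strictMonoOn_of_lt_add_one Set.ordConnected_Icc fun a _ ha ha1 => ?_
  rcases (Set.mem_Icc.1 ha1).2.lt_or_eq with han | han
  · simpa using hmono (a + 1) (by have := ha.1; omega) (by omega)
  · rw [han, hfn]
    exact flag_lt_mul hbound ha.1 (by omega)

theorem stmt7_general (n k : ℕ) (hn : 2 ≤ n)
    (f : ℕ → ℕ)
    (hmono : ∀ j : ℕ, 2 ≤ j → j ≤ n - 1 → f (j - 1) < f j)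
    (hbound : ∀ m : ℕ, 1 ≤ m → m ≤ n - 1 → f m < k * m)
    (hfn : f n = k * n) :
    Nat.card {s : Fin (k * n) → Fin n //
        RuleR1 n k s ∧ RuleR2 n k s ∧ HasFlags n k s f} =
      ∏ i ∈ Finset.Icc 2 n, i ^ (f i - f (i - 1) - 1) ∧
    ∀ s : Fin (k * n) → Fin n,
      (RuleR1 n k s ∧ RuleR2 n k s ∧ HasFlags n k s f) ↔
      ∀ i : Fin (k * n),
        ((i : ℕ) < f 1 → (s i : ℕ) = 0) ∧
        (∀ j : ℕ, 1 ≤ j → j ≤ n - 1 → (i : ℕ) = f j → (s i : ℕ) = j) ∧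
        (∀ j : ℕ, 1 ≤ j → j ≤ n - 2 → f j < (i : ℕ) → (i : ℕ) < f (j + 1) →
          (s i : ℕ) ≤ j) := by
  have hf := strictMonoOn_Icc_of_flags hmono hbound hfn
  have hf' := hf.mono (Set.Icc_subset_Icc_right (Nat.sub_le n 1))
  have hiff := fun s => ruleR1_and_ruleR2_and_hasFlags_iff (s := s) hf' hbound
  refine ⟨?_, hiff⟩
  rw [Nat.card_congr (Equiv.subtypeEquivRight hiff),
    Nat.card_congr (Equiv.subtypePiEquivPi
      (p := fun (i : Fin (k * n)) (v : Fin n) => FlagAllowed n f i v)),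
    Nat.card_pi, Fin.prod_univ_eq_prod_range (fun i => Nat.card {v : Fin n // FlagAllowed n f i v}),
    ← hfn]
  exact prod_range_flag_eq_prod_pow _ hf (by omega)
    (fun _ hi => card_flagAllowed_of_lt_flag_one hf' (by omega) hi)
    (fun _ ht1 htn => card_flagAllowed_flag hf' ht1 (by omega))
    (fun _ ht1 htn _ hti hit => card_flagAllowed_of_mem_Ioo hf' ht1 (by omega) hti hit)

/-- Fix `n ≥ 2`, `k ≥ 1` and a flag sequence `(f_j)_{j∈[1,n-1]}` (strictly
increasing, with `f_m < k*m`), extended by `f n = k*n`.  The number of strings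
satisfying (R1) and (R2) whose first-occurrence indices of `1, …, n-1` are
exactly the `f_j` equals `∏_{i=2}^{n} i^(f_i - f_{i-1} - 1)`; equivalently,
such strings are exactly those with `s_i = 0` for `i < f_1`, `s_{f_j} = j` for
`j ∈ [1, n-1]`, `s_i ∈ [0, j]` for `f_j < i < f_{j+1}` with `j ∈ [1, n-2]`
(and `s_i ∈ [0, n-1]` for `i > f_{n-1}`, which is automatic). -/
theorem stmt7 (n k : ℕ) (hn : 2 ≤ n) (hk : 1 ≤ k)
    (f : ℕ → ℕ)
    (hmono : ∀ j : ℕ, 2 ≤ j → j ≤ n - 1 → f (j - 1) < f j)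
    (hbound : ∀ m : ℕ, 1 ≤ m → m ≤ n - 1 → f m < k * m)
    (hfn : f n = k * n) :
    Nat.card {s : Fin (k * n) → Fin n //
        RuleR1 n k s ∧ RuleR2 n k s ∧ HasFlags n k s f} =
      ∏ i ∈ Finset.Icc 2 n, i ^ (f i - f (i - 1) - 1) ∧
    ∀ s : Fin (k * n) → Fin n,
      (RuleR1 n k s ∧ RuleR2 n k s ∧ HasFlags n k s f) ↔
      ∀ i : Fin (k * n),
        ((i : ℕ) < f 1 → (s i : ℕ) = 0) ∧
        (∀ j : ℕ, 1 ≤ j → j ≤ n - 1 → (i : ℕ) = f j → (s i : ℕ) = j) ∧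
        (∀ j : ℕ, 1 ≤ j → j ≤ n - 2 → f j < (i : ℕ) → (i : ℕ) < f (j + 1) →
          (s i : ℕ) ≤ j) :=
  stmt7_general n k hn f hmono hbound hfn
end

section
/- For all integers n ≥ 2 and k ≥ 1, the number of strings (s_i)_{i∈[0,kn−1]} with s_i ∈ [0,n−1] satisfying rules (R1) and (R2) is B_{k,n} = Σ_{f_1=0}^{k−1} Σ_{f_2=f_1+1}^{2k−1} Σ_{f_3=f_2+1}^{3k−1} ⋯ Σ_{f_{n−1}=f_{n−2}+1}^{k(n−1)−1} ∏_{i=2}^{n} i^{f_i−f_{i−1}−1}, where f_n = kn. -/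
/-- The extension of a flag sequence to indices `1, …, n`:  `flagExt f i = f_i`
for `i ∈ [1, n-1]` and `flagExt f n = k*n`. -/
def flagExt (n k : ℕ) (f : Fin (n - 1) → Fin (k * (n - 1))) (i : ℕ) : ℕ :=
  if h : i - 1 < n - 1 then (f ⟨i - 1, h⟩ : ℕ) else k * n

/-!
Record a valid string by the positions `f_1 < ⋯ < f_{n-1}` of the first occurrences of the
letters `1, …, n-1`: (R1) makes them increase and (R2) says `f_m < km`, so they form a flag
sequence. Conversely, a string has its first occurrences at a given flag sequence iff it carries
`m` at `f_m` and, at every other position `i`, a letter already seen: `0` or some `m` with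
`f_m < i`. These conditions are independent across positions, and a non-flag position between
`f_{t-1}` and `f_t` has `t` choices, whence the product `∏ t ^ (f_t - f_{t-1} - 1)` for each
flag sequence.
-/

open Finset

/-- The letters `v` that may stand at position `i` of a string whose first occurrences of the
letters `1, …, r` are at the positions `G 1, …, G r`. -/
def IsAllowedAt (r : ℕ) (G : ℕ → ℕ) (i v : ℕ) : Prop :=
  (∀ t ∈ Icc 1 r, G t = i → v = t) ∧ (v ∈ Icc 1 r → G v ≤ i)

def numChoices (r : ℕ) (G : ℕ → ℕ) (i : ℕ) : ℕ :=
  if i ∈ (Icc 1 r).image G then 1 else #{t ∈ Icc 1 r | G t < i} + 1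

-- `0` when `v` does not occur in `s`
noncomputable def firstOcc {L n : ℕ} (s : Fin L → Fin n) (v : ℕ) : ℕ :=
  sInf {i | ∃ h : i < L, (s ⟨i, h⟩ : ℕ) = v}

section Counting

variable {r : ℕ} {G : ℕ → ℕ}

lemma numChoices_succ_of_lt {i : ℕ} (hi : i < G (r + 1)) :
    numChoices (r + 1) G i = numChoices r G i := by
  have hfilter : {t ∈ Icc 1 (r + 1) | G t < i} = {t ∈ Icc 1 r | G t < i} := by
    rw [← insert_Icc_right_eq_Icc_add_one le_add_self, filter_insert, if_neg hi.not_gt]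
  have himage : i ∈ (Icc 1 (r + 1)).image G ↔ i ∈ (Icc 1 r).image G := by
    rw [← insert_Icc_right_eq_Icc_add_one le_add_self, image_insert, mem_insert,
      or_iff_right hi.ne]
  simp only [numChoices, hfilter, himage]

lemma numChoices_self (r : ℕ) (G : ℕ → ℕ) : numChoices (r + 1) G (G (r + 1)) = 1 :=
  if_pos (mem_image_of_mem G (right_mem_Icc.2 le_add_self))

lemma numChoices_of_forall_lt {i : ℕ} (hi : ∀ t ∈ Icc 1 r, G t < i) :
    numChoices r G i = r + 1 := by
  have himage : i ∉ (Icc 1 r).image G := by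
    simp only [mem_image, not_exists, not_and]
    exact fun t ht => (hi t ht).ne
  rw [numChoices, if_neg himage, filter_true_of_mem hi, Nat.card_Icc, Nat.add_sub_cancel]

theorem prod_numChoices (r : ℕ) (hG : StrictMonoOn G (Set.Icc 1 (r + 1))) :
    ∏ i ∈ range (G (r + 1)), numChoices r G i =
      ∏ t ∈ Icc 2 (r + 1), t ^ (G t - G (t - 1) - 1) := by
  induction r with
  | zero => simp [numChoices]
  | succ r ih =>
    have hlt : G (r + 1) < G (r + 2) :=
      hG ⟨le_add_self, by omega⟩ ⟨by omega, le_rfl⟩ (by omega)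
    have hbelow : ∏ i ∈ range (G (r + 1)), numChoices (r + 1) G i =
        ∏ t ∈ Icc 2 (r + 1), t ^ (G t - G (t - 1) - 1) := by
      rw [← ih (hG.mono (Set.Icc_subset_Icc_right (by omega)))]
      exact prod_congr rfl fun i hi => numChoices_succ_of_lt (mem_range.1 hi)
    have habove : ∀ i ∈ Ico (G (r + 1) + 1) (G (r + 2)), numChoices (r + 1) G i = r + 2 := by
      intro i hi
      refine numChoices_of_forall_lt fun t ht => ?_
      have ht' := mem_Icc.1 ht
      have := (mem_Ico.1 hi).1
      have := hG.monotoneOn ⟨ht'.1, by omega⟩ ⟨by omega, by omega⟩ ht'.2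
      omega
    rw [← prod_range_mul_prod_Ico _ hlt, prod_range_succ, numChoices_self, mul_one, hbelow,
      prod_congr rfl habove, prod_const, Nat.card_Ico, prod_Icc_succ_top (b := r + 1) (by omega),
      Nat.add_sub_cancel, Nat.sub_sub]

lemma isAllowedAt_congr {G' : ℕ → ℕ} (h : Set.EqOn G G' (Icc 1 r)) {i v : ℕ} :
    IsAllowedAt r G i v ↔ IsAllowedAt r G' i v :=
  and_congr (forall₂_congr fun _ ht => by rw [h ht]) (imp_congr_right fun hv => by rw [h hv])

open Classical in
lemma card_filter_isAllowedAt (hG : Set.InjOn G (Icc 1 r)) (i : ℕ) :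
    #{v ∈ range (r + 1) | IsAllowedAt r G i v} = numChoices r G i := by
  unfold numChoices
  split_ifs with hi
  · obtain ⟨t, ht, rfl⟩ := mem_image.1 hi
    rw [card_eq_one]
    refine ⟨t, eq_singleton_iff_unique_mem.2 ⟨?_, fun v hv => (mem_filter.1 hv).2.1 t ht rfl⟩⟩
    refine mem_filter.2 ⟨mem_range.2 (Nat.lt_succ_of_le (mem_Icc.1 ht).2), ?_, fun _ => le_rfl⟩
    exact fun t' ht' h => hG ht ht' h.symm
  · have hne : ∀ t, 1 ≤ t ∧ t ≤ r → G t ≠ i :=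
      fun t ht h => hi (mem_image.2 ⟨t, mem_Icc.2 ht, h⟩)
    have hfilter : {v ∈ range (r + 1) | IsAllowedAt r G i v} =
        insert 0 {t ∈ Icc 1 r | G t < i} := by
      ext v
      simp only [IsAllowedAt, mem_filter, mem_range, mem_insert, mem_Icc]
      constructor
      · rintro ⟨hv, -, hle⟩
        rcases Nat.eq_zero_or_pos v with h0 | hpos
        · exact Or.inl h0
        · exact Or.inr ⟨⟨hpos, by omega⟩,
            lt_of_le_of_ne (hle ⟨hpos, by omega⟩) (hne v ⟨hpos, by omega⟩)⟩
      · rintro (rfl | ⟨hv, hlt⟩)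
        · exact ⟨by omega, fun t ht h => absurd h (hne t ht), fun h => absurd h.1 (by omega)⟩
        · exact ⟨by omega, fun t ht h => absurd h (hne t ht), fun _ => hlt.le⟩
    rw [hfilter, card_insert_of_notMem (by simp)]

open Classical in
lemma Fin.natCard_subtype_eq_card_filter_range (n : ℕ) (P : ℕ → Prop) :
    Nat.card {v : Fin n // P v} = #{v ∈ range n | P v} := by
  rw [Nat.card_eq_fintype_card, Fintype.card_subtype, ← card_map Fin.valEmbedding]
  congr 1
  ext v
  simp only [mem_map, mem_filter, mem_univ, true_and, Fin.valEmbedding_apply, mem_range]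
  exact ⟨fun ⟨a, ha, hav⟩ => hav ▸ ⟨a.2, ha⟩, fun ⟨hv, hp⟩ => ⟨⟨v, hv⟩, hp, rfl⟩⟩

theorem card_forall_isAllowedAt {L n : ℕ} (hn : 0 < n) (hG : Set.InjOn G (Icc 1 (n - 1))) :
    Nat.card {s : Fin L → Fin n // ∀ i : Fin L, IsAllowedAt (n - 1) G i (s i)} =
      ∏ i ∈ range L, numChoices (n - 1) G i := by
  rw [Nat.card_congr (Equiv.subtypePiEquivPi
      (p := fun (i : Fin L) (v : Fin n) => IsAllowedAt (n - 1) G i v)), Nat.card_pi,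
    ← Fin.prod_univ_eq_prod_range]
  refine prod_congr rfl fun i _ => ?_
  rw [Fin.natCard_subtype_eq_card_filter_range, ← card_filter_isAllowedAt hG,
    Nat.sub_add_cancel hn]

end Counting

section FirstOccurrence

variable {L n : ℕ} {s : Fin L → Fin n}

lemma firstOcc_le {i : Fin L} {v : ℕ} (h : (s i : ℕ) = v) : firstOcc s v ≤ i :=
  Nat.sInf_le ⟨i.2, h⟩

lemma exists_firstOcc {i : Fin L} {v : ℕ} (h : (s i : ℕ) = v) :
    ∃ h : firstOcc s v < L, (s ⟨firstOcc s v, h⟩ : ℕ) = v := by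
  have hne : {j | ∃ h : j < L, (s ⟨j, h⟩ : ℕ) = v}.Nonempty := ⟨i, i.2, h⟩
  exact Nat.sInf_mem hne

lemma isAllowedAt_firstOcc {r : ℕ} (hocc : ∀ t ∈ Icc 1 r, ∃ i, (s i : ℕ) = t) (i : Fin L) :
    IsAllowedAt r (firstOcc s) i (s i) := by
  refine ⟨fun t ht hti => ?_, fun _ => firstOcc_le rfl⟩
  obtain ⟨j, hj⟩ := hocc t ht
  obtain ⟨h, hst⟩ := exists_firstOcc hj
  have hpos : (⟨firstOcc s t, h⟩ : Fin L) = i := Fin.ext hti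
  rwa [← hpos]

lemma firstOcc_eq_of_isAllowedAt {r : ℕ} {G : ℕ → ℕ} (hs : ∀ i : Fin L, IsAllowedAt r G i (s i))
    (hGL : ∀ t ∈ Icc 1 r, G t < L) {t : ℕ} (ht : t ∈ Icc 1 r) : firstOcc s t = G t := by
  have hflag : (s ⟨G t, hGL t ht⟩ : ℕ) = t := (hs _).1 t ht rfl
  obtain ⟨h, hfirst⟩ := exists_firstOcc hflag
  have hge := (hs ⟨firstOcc s t, h⟩).2
  rw [hfirst] at hge
  exact le_antisymm (firstOcc_le hflag) (hge ht)

end FirstOccurrence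

section Flags

variable {n k : ℕ} {f : Fin (n - 1) → Fin (k * (n - 1))}

lemma flagExt_eq {t : ℕ} (ht : t ∈ Icc 1 (n - 1)) :
    flagExt n k f t = f ⟨t - 1, by grind⟩ :=
  dif_pos _

lemma flagExt_self : flagExt n k f n = k * n :=
  dif_neg (by omega)

lemma IsFlagSeq.flagExt_lt (hf : IsFlagSeq n k f) {t : ℕ} (ht : t ∈ Icc 1 (n - 1)) :
    flagExt n k f t < k * t := by
  have := hf.2 ⟨t - 1, by grind⟩
  rw [flagExt_eq ht]
  simp only [Nat.sub_add_cancel (mem_Icc.1 ht).1] at this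
  exact this

lemma IsFlagSeq.flagExt_lt_mul_self (hf : IsFlagSeq n k f) {t : ℕ} (ht : t ∈ Icc 1 (n - 1)) :
    flagExt n k f t < k * n :=
  (hf.flagExt_lt ht).trans_le (Nat.mul_le_mul_left k (by grind))

lemma IsFlagSeq.strictMonoOn_flagExt (hf : IsFlagSeq n k f) :
    StrictMonoOn (flagExt n k f) (Set.Icc 1 n) := by
  rintro a ⟨ha1, han⟩ b ⟨hb1, hbn⟩ hab
  have ha : a ∈ Icc 1 (n - 1) := mem_Icc.2 ⟨ha1, by omega⟩
  rcases Nat.lt_or_ge b n with hb | hb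
  · rw [flagExt_eq ha, flagExt_eq (mem_Icc.2 ⟨hb1, by omega⟩)]
    exact hf.1 (Fin.mk_lt_mk.2 (by omega))
  · rw [show b = n by omega, flagExt_self]
    exact hf.flagExt_lt_mul_self ha

theorem IsFlagSeq.ruleR1_and_ruleR2 (hf : IsFlagSeq n k f) {s : Fin (k * n) → Fin n}
    (hs : ∀ i : Fin (k * n), IsAllowedAt (n - 1) (flagExt n k f) i (s i)) :
    RuleR1 n k s ∧ RuleR2 n k s := by
  have hflag (t : ℕ) (ht : t ∈ Icc 1 (n - 1)) :
      (s ⟨flagExt n k f t, hf.flagExt_lt_mul_self ht⟩ : ℕ) = t :=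
    (hs _).1 t ht rfl
  constructor
  · intro m hm2 hmn i hsi
    have hprev : m - 1 ∈ Icc 1 (n - 1) := mem_Icc.2 ⟨by omega, by omega⟩
    have hle := (hs i).2
    rw [hsi] at hle
    have hlt : flagExt n k f (m - 1) < flagExt n k f m :=
      hf.strictMonoOn_flagExt ⟨by omega, by omega⟩ ⟨by omega, by omega⟩ (by omega)
    exact ⟨_, hlt.trans_le (hle (mem_Icc.2 ⟨by omega, hmn⟩)), hflag _ hprev⟩
  · intro m hm1 hmn
    have hm : m ∈ Icc 1 (n - 1) := mem_Icc.2 ⟨hm1, hmn⟩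
    exact ⟨_, hf.flagExt_lt hm, hflag m hm⟩

variable {s : Fin (k * n) → Fin n}

lemma RuleR2.exists_eq (hs : RuleR2 n k s) {t : ℕ} (ht : t ∈ Icc 1 (n - 1)) :
    ∃ i, (s i : ℕ) = t :=
  let ⟨i, _, hi⟩ := hs t (mem_Icc.1 ht).1 (mem_Icc.1 ht).2
  ⟨i, hi⟩

lemma RuleR2.firstOcc_lt (hs : RuleR2 n k s) {t : ℕ} (ht : t ∈ Icc 1 (n - 1)) :
    firstOcc s t < k * t :=
  let ⟨_, hi, hsi⟩ := hs t (mem_Icc.1 ht).1 (mem_Icc.1 ht).2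
  (firstOcc_le hsi).trans_lt hi

lemma strictMonoOn_firstOcc (h1 : RuleR1 n k s) (h2 : RuleR2 n k s) :
    StrictMonoOn (firstOcc s) (Set.Icc 1 (n - 1)) := by
  refine strictMonoOn_of_lt_add_one Set.ordConnected_Icc fun a _ ha ha' => ?_
  obtain ⟨i, hi⟩ := h2.exists_eq (mem_Icc.2 ha')
  obtain ⟨h, hfirst⟩ := exists_firstOcc hi
  obtain ⟨j, hj, hsj⟩ := h1 (a + 1) (by grind) ha'.2 _ hfirst
  exact (firstOcc_le hsj).trans_lt hj

noncomputable def flagOf (s : Fin (k * n) → Fin n) (hs : RuleR2 n k s) :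
    Fin (n - 1) → Fin (k * (n - 1)) :=
  fun m => ⟨firstOcc s (m + 1), (hs.firstOcc_lt (mem_Icc.2 ⟨le_add_self, m.2⟩)).trans_le
    (Nat.mul_le_mul_left k m.2)⟩

lemma flagExt_flagOf (hs : RuleR2 n k s) : Set.EqOn (flagExt n k (flagOf s hs)) (firstOcc s)
    (Icc 1 (n - 1)) := by
  intro t ht
  rw [flagExt_eq ht]
  simp only [flagOf, Nat.sub_add_cancel (mem_Icc.1 ht).1]

lemma isFlagSeq_flagOf (h1 : RuleR1 n k s) (h2 : RuleR2 n k s) : IsFlagSeq n k (flagOf s h2) :=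
  ⟨fun a b hab => strictMonoOn_firstOcc h1 h2 ⟨le_add_self, a.2⟩ ⟨le_add_self, b.2⟩
      (Nat.add_lt_add_right hab 1),
    fun m => h2.firstOcc_lt (mem_Icc.2 ⟨le_add_self, m.2⟩)⟩

lemma isAllowedAt_flagOf (hs : RuleR2 n k s) (i : Fin (k * n)) :
    IsAllowedAt (n - 1) (flagExt n k (flagOf s hs)) i (s i) :=
  (isAllowedAt_congr (flagExt_flagOf hs)).2 (isAllowedAt_firstOcc (fun _ => hs.exists_eq) i)

lemma flagOf_eq (hf : IsFlagSeq n k f)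
    (hs : ∀ i : Fin (k * n), IsAllowedAt (n - 1) (flagExt n k f) i (s i))
    (h2 : RuleR2 n k s) : flagOf s h2 = f := by
  funext m
  have hm : (m : ℕ) + 1 ∈ Icc 1 (n - 1) := mem_Icc.2 ⟨le_add_self, m.2⟩
  refine Fin.ext ((firstOcc_eq_of_isAllowedAt hs (fun _ => hf.flagExt_lt_mul_self) hm).trans ?_)
  simp [flagExt_eq hm]

end Flags

noncomputable def validEquivSigma (n k : ℕ) :
    {s : Fin (k * n) → Fin n // RuleR1 n k s ∧ RuleR2 n k s} ≃
      Σ f : {f : Fin (n - 1) → Fin (k * (n - 1)) // IsFlagSeq n k f},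
        {s : Fin (k * n) → Fin n //
          ∀ i : Fin (k * n), IsAllowedAt (n - 1) (flagExt n k f.1) i (s i)} where
  toFun s := ⟨⟨flagOf s.1 s.2.2, isFlagSeq_flagOf s.2.1 s.2.2⟩, ⟨s.1, isAllowedAt_flagOf s.2.2⟩⟩
  invFun p := ⟨p.2.1, p.1.2.ruleR1_and_ruleR2 p.2.2⟩
  left_inv _ := rfl
  right_inv := by
    rintro ⟨⟨f, hf⟩, ⟨s, hs⟩⟩
    have hvalid := hf.ruleR1_and_ruleR2 hs
    obtain rfl := flagOf_eq hf hs hvalid.2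
    rfl

theorem stmt8_general (n k : ℕ) (hn : 2 ≤ n) :
    Nat.card {s : Fin (k * n) → Fin n // RuleR1 n k s ∧ RuleR2 n k s} =
      ∑ᶠ f : {f : Fin (n - 1) → Fin (k * (n - 1)) // IsFlagSeq n k f},
        ∏ i ∈ Finset.Icc 2 n, i ^ (flagExt n k f.1 i - flagExt n k f.1 (i - 1) - 1) := by
  classical
  rw [Nat.card_congr (validEquivSigma n k), Nat.card_sigma, finsum_eq_sum_of_fintype]
  refine sum_congr rfl fun ⟨f, hf⟩ _ => ?_
  have hmono : StrictMonoOn (flagExt n k f) (Set.Icc 1 (n - 1 + 1)) := by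
    rw [Nat.sub_add_cancel (by omega)]
    exact hf.strictMonoOn_flagExt
  have hprod := prod_numChoices (n - 1) hmono
  rw [Nat.sub_add_cancel (by omega), flagExt_self] at hprod
  rw [card_forall_isAllowedAt (by omega)
    (hf.strictMonoOn_flagExt.injOn.mono (by simp [Set.Icc_subset_Icc_right])), hprod]

/-- The number of strings satisfying (R1) and (R2) is
`B_{k,n} = Σ_{f_1=0}^{k-1} Σ_{f_2=f_1+1}^{2k-1} ⋯ Σ_{f_{n-1}=f_{n-2}+1}^{k(n-1)-1}
∏_{i=2}^{n} i^(f_i - f_{i-1} - 1)` (with `f_n = kn`), the inner nested sums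
being expressed as a single sum over all flag sequences. -/
theorem stmt8 (n k : ℕ) (hn : 2 ≤ n) (hk : 1 ≤ k) :
    Nat.card {s : Fin (k * n) → Fin n // RuleR1 n k s ∧ RuleR2 n k s} =
      ∑ᶠ f : {f : Fin (n - 1) → Fin (k * (n - 1)) // IsFlagSeq n k f},
        ∏ i ∈ Finset.Icc 2 n, i ^ (flagExt n k f.1 i - flagExt n k f.1 (i - 1) - 1) :=
  stmt8_general n k hn
end

section
/- Fix integers n ≥ 2 and k ≥ 1, and define the table N_{m,j} by the recurrence N_{n−1,j} = n^{nk−1−j} for j ∈ [n−2,(n−1)k−1], and N_{m,j} = Σ_{i=0}^{(m+1)k−j−2} (m+1)^i · N_{m+1, j+i+1} for m ∈ [1,n−2] and j ∈ [m−1, mk−1]. Then B_{k,n} = Σ_{l=0}^{k−1} N_{1,l}, where B_{k,n} is the number of strings (s_i)_{i∈[0,kn−1]} with s_i ∈ [0,n−1] satisfying rules (R1) and (R2). -/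
/-- The table `N_{m,j}`:  `N_{n-1,j} = n^(nk-1-j)` and, for `m < n-1`,
`N_{m,j} = Σ_{i=0}^{(m+1)k-j-2} (m+1)^i · N_{m+1, j+i+1}`. -/
def Ntab (n k : ℕ) (m j : ℕ) : ℕ :=
  if n - 1 ≤ m then n ^ (n * k - 1 - j)
  else ∑ i ∈ Finset.range ((m + 1) * k - j - 1), (m + 1) ^ i * Ntab n k (m + 1) (j + i + 1)
termination_by n - 1 - m
decreasing_by omega

/-!
Read a valid string letter by letter, keeping track of the number `p` of letters read and of the
running maximum `m`. By (R1) the letters read so far are exactly `0, …, m`, so what remains to be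
checked of the rest of the string depends only on `m` and `p`; let `S(m, p, L)` (`suffixCount`)
count the valid continuations of length `L`. The next letter is either at most `m` (`m + 1`
choices, state `(m, p + 1)`), or equal to `m + 1`, which (R2) allows only while `p < k (m + 1)`;
any larger letter violates (R1). Unrolling this recursion up to the first occurrence of `m + 1`
gives the recurrence of `N`, with `N_{m,j} = S(m, j + 1, kn - j - 1)`: once the maximum is
`n - 1`, every continuation is valid, which gives the initial values `n ^ (nk - 1 - j)`.
-/

theorem Nat.card_subtype_fin_cons {α : Type*} [Fintype α] {L : ℕ}
    (P : (Fin (L + 1) → α) → Prop) :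
    Nat.card {f // P f} = ∑ a, Nat.card {t : Fin L → α // P (Fin.cons a t)} := by
  rw [← Nat.card_sigma]
  exact Nat.card_congr <| ((Fin.consEquiv fun _ => α).symm.subtypeEquiv fun f => by simp).trans
    (Equiv.subtypeProdEquivSigmaSubtype fun a t => P (Fin.cons a t))

section ValidSuffix

variable (n k : ℕ)

/-- `t` is what may follow `p` letters whose maximum is `m` and which satisfy (R1) and (R2) as
far as they can be checked on them. -/
def IsValidSuffix (m p : ℕ) {L : ℕ} (t : Fin L → Fin n) : Prop :=
  (∀ v, m + 2 ≤ v → ∀ i, (t i : ℕ) = v → ∃ j < i, (t j : ℕ) = v - 1) ∧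
  ∀ v, m < v → v < n → ∃ j : Fin L, p + j < k * v ∧ (t j : ℕ) = v

noncomputable def suffixCount (m p L : ℕ) : ℕ :=
  Nat.card {t : Fin L → Fin n // IsValidSuffix n k m p t}

variable {n k}

theorem ruleR1_and_ruleR2_iff (s : Fin (k * n) → Fin n) :
    RuleR1 n k s ∧ RuleR2 n k s ↔ IsValidSuffix n k 0 0 s := by
  refine and_congr ⟨fun h v hv i hi => h v hv (by have := (s i).isLt; omega) i hi,
    fun h v hv _ => h v hv⟩ ⟨fun h v hv hvn => ?_, fun h v hv hvn => ?_⟩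
  · simpa using h v hv (by omega)
  · simpa using h v hv (by omega)

theorem isValidSuffix_of_le {m p L : ℕ} (hm : n ≤ m + 1) (t : Fin L → Fin n) :
    IsValidSuffix n k m p t :=
  ⟨fun v hv i hi => by have := (t i).isLt; omega, fun v hv hvn => by omega⟩

theorem suffixCount_of_le {m : ℕ} (hm : n ≤ m + 1) (p L : ℕ) :
    suffixCount n k m p L = n ^ L := by
  simp [suffixCount, isValidSuffix_of_le hm]

theorem suffixCount_zero {m : ℕ} (hm : m + 1 < n) (p : ℕ) : suffixCount n k m p 0 = 0 := by
  have (t : Fin 0 → Fin n) : ¬ IsValidSuffix n k m p t := fun ht => by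
    obtain ⟨j, -⟩ := ht.2 (m + 1) (by omega) hm
    exact j.elim0
  simp [suffixCount, this]

variable {m p L : ℕ} {a : Fin n} {t : Fin L → Fin n}

theorem isValidSuffix_cons_of_le (ha : (a : ℕ) ≤ m) :
    IsValidSuffix n k m p (Fin.cons a t) ↔ IsValidSuffix n k m (p + 1) t := by
  simp only [IsValidSuffix, Fin.forall_fin_succ, Fin.exists_fin_succ, Fin.cons_zero,
    Fin.cons_succ, Fin.val_zero, Fin.val_succ, Fin.succ_lt_succ_iff, Fin.succ_pos,
    Fin.not_lt_zero]
  constructor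
  · rintro ⟨h1, h2⟩
    refine ⟨fun v hv i hi => ?_, fun v hv hvn => ?_⟩
    · rcases (h1 v hv).2 i hi with h | ⟨j, hj⟩
      · omega
      · exact ⟨j, hj⟩
    · rcases h2 v hv hvn with h | ⟨j, hj⟩
      · omega
      · exact ⟨j, by omega, hj.2⟩
  · rintro ⟨h1, h2⟩
    refine ⟨fun v hv => ⟨fun h => by omega, fun i hi => Or.inr (h1 v hv i hi)⟩,
      fun v hv hvn => Or.inr ?_⟩
    obtain ⟨j, hj⟩ := h2 v hv hvn
    exact ⟨j, by omega, hj.2⟩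

theorem isValidSuffix_cons_of_eq_succ (ha : (a : ℕ) = m + 1) :
    IsValidSuffix n k m p (Fin.cons a t) ↔
      p < k * (m + 1) ∧ IsValidSuffix n k (m + 1) (p + 1) t := by
  simp only [IsValidSuffix, Fin.forall_fin_succ, Fin.exists_fin_succ, Fin.cons_zero,
    Fin.cons_succ, Fin.val_zero, Fin.val_succ, Fin.succ_lt_succ_iff, Fin.succ_pos,
    Fin.not_lt_zero]
  constructor
  · rintro ⟨h1, h2⟩
    refine ⟨?_, fun v hv i hi => ?_, fun v hv hvn => ?_⟩
    · rcases h2 (m + 1) (by omega) (by omega) with h | ⟨j, hj⟩ <;> omega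
    · rcases (h1 v (by omega)).2 i hi with h | ⟨j, hj⟩
      · omega
      · exact ⟨j, hj⟩
    · rcases h2 v (by omega) hvn with h | ⟨j, hj⟩
      · omega
      · exact ⟨j, by omega, hj.2⟩
  · rintro ⟨hp, h1, h2⟩
    refine ⟨fun v hv => ⟨fun h => by omega, fun i hi => ?_⟩, fun v hv hvn => ?_⟩
    · by_cases hvm : v = m + 2
      · exact Or.inl ⟨trivial, by omega⟩
      · exact Or.inr (h1 v (by omega) i hi)
    · by_cases hvm : v = m + 1
      · exact Or.inl ⟨by subst hvm; simpa using hp, by omega⟩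
      · obtain ⟨j, hj⟩ := h2 v (by omega) hvn
        exact Or.inr ⟨j, by omega, hj.2⟩

theorem not_isValidSuffix_cons_of_lt (ha : m + 1 < a) : ¬ IsValidSuffix n k m p (Fin.cons a t) :=
  fun h => by
    obtain ⟨j, hj, -⟩ := h.1 a (by omega) 0 (by simp)
    exact Fin.not_lt_zero j hj

theorem suffixCount_succ (hm : m + 1 < n) (p L : ℕ) :
    suffixCount n k m p (L + 1) = (m + 1) * suffixCount n k m (p + 1) L +
      if p < k * (m + 1) then suffixCount n k (m + 1) (p + 1) L else 0 := by
  set g : ℕ → ℕ := fun a => if a ≤ m then suffixCount n k m (p + 1) L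
    else if a = m + 1 ∧ p < k * (m + 1) then suffixCount n k (m + 1) (p + 1) L else 0
  have hcons (a : Fin n) :
      Nat.card {t : Fin L → Fin n // IsValidSuffix n k m p (Fin.cons a t)} = g a := by
    rcases lt_trichotomy (a : ℕ) (m + 1) with h | h | h
    · simp only [g, isValidSuffix_cons_of_le (Nat.le_of_lt_succ h), if_pos (Nat.le_of_lt_succ h),
        suffixCount]
    · by_cases hp : p < k * (m + 1) <;>
        simp [g, isValidSuffix_cons_of_eq_succ h, h, hp, suffixCount]
    · simp [g, not_isValidSuffix_cons_of_lt h, h.ne', Nat.not_le_of_lt (Nat.lt_of_succ_lt h)]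
  have hvanish : ∀ a ∈ Finset.range n, a ∉ Finset.range (m + 2) → g a = 0 := by
    intro a _ ha
    simp only [Finset.mem_range] at ha
    simp only [g, if_neg (show ¬ a ≤ m by omega), ite_eq_right_iff]
    omega
  rw [suffixCount, Nat.card_subtype_fin_cons, Fintype.sum_congr _ _ hcons,
    Fin.sum_univ_eq_sum_range g, ← Finset.sum_subset (Finset.range_subset_range.2 hm) hvanish,
    Finset.sum_range_succ, Finset.sum_congr rfl fun a ha => if_pos (Finset.mem_range_succ_iff.1 ha)]
  simp [g]

theorem suffixCount_eq_sum (hm : m + 1 < n) (p L : ℕ) :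
    suffixCount n k m p L = ∑ i ∈ Finset.range L,
      if p + i < k * (m + 1) then (m + 1) ^ i * suffixCount n k (m + 1) (p + i + 1) (L - i - 1)
      else 0 := by
  induction L generalizing p with
  | zero => simp [suffixCount_zero hm]
  | succ L ih =>
    rw [suffixCount_succ hm, ih, Finset.sum_range_succ', Finset.mul_sum]
    congr 1
    · refine Finset.sum_congr rfl fun i _ => ?_
      rw [show p + 1 + i = p + (i + 1) by ring, show L + 1 - (i + 1) - 1 = L - i - 1 by omega]
      split_ifs <;> ring
    · simp

theorem suffixCount_eq_sum_range (hm : m + 1 < n) (hL : k * (m + 1) ≤ p + L) :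
    suffixCount n k m p L = ∑ i ∈ Finset.range (k * (m + 1) - p),
      (m + 1) ^ i * suffixCount n k (m + 1) (p + i + 1) (L - i - 1) := by
  rw [suffixCount_eq_sum hm, ← Finset.sum_filter]
  congr 1
  ext i
  simp only [Finset.mem_filter, Finset.mem_range]
  omega

variable (n k) in
theorem ntab_eq_suffixCount (m j : ℕ) :
    Ntab n k m j = suffixCount n k m (j + 1) (k * n - (j + 1)) := by
  rw [Ntab]
  split_ifs with hm
  · rw [suffixCount_of_le (by omega), Nat.mul_comm k n, Nat.sub_sub, Nat.add_comm 1]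
  · have : k * (m + 1) ≤ k * n := Nat.mul_le_mul_left k (by omega)
    rw [suffixCount_eq_sum_range (by omega) (by omega), Nat.mul_comm (m + 1), Nat.sub_sub]
    refine Finset.sum_congr rfl fun i _ => ?_
    rw [ntab_eq_suffixCount (m + 1) (j + i + 1)]
    congr 2 <;> omega
termination_by n - 1 - m

end ValidSuffix

theorem stmt10_general (n k : ℕ) (hn : 2 ≤ n) :
    Nat.card {s : Fin (k * n) → Fin n // RuleR1 n k s ∧ RuleR2 n k s} =
      ∑ l ∈ Finset.range k, Ntab n k 1 l := by
  have hlen : k * (0 + 1) ≤ 0 + k * n := by simpa using Nat.le_mul_of_pos_right k (by omega)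
  rw [Nat.card_congr (Equiv.subtypeEquivRight ruleR1_and_ruleR2_iff), ← suffixCount,
    suffixCount_eq_sum_range (by omega) hlen]
  simp only [zero_add, mul_one, Nat.sub_zero, one_pow, one_mul, ntab_eq_suffixCount, Nat.sub_sub]

/-- `B_{k,n} = Σ_{l=0}^{k-1} N_{1,l}`, where `B_{k,n}` is the number of
strings satisfying rules (R1) and (R2). -/
theorem stmt10 (n k : ℕ) (hn : 2 ≤ n) (hk : 1 ≤ k) :
    Nat.card {s : Fin (k * n) → Fin n // RuleR1 n k s ∧ RuleR2 n k s} =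
      ∑ l ∈ Finset.range k, Ntab n k 1 l :=
  stmt10_general n k hn
end

section
/- Fix integers n ≥ 2 and k ≥ 1, let m ∈ [1,n−1] and j ∈ [m−1, mk−1], and fix a prefix (s_0,…,s_j) with entries in [0,m] such that the values occurring in the prefix are exactly 0,1,…,m, the first occurrences of 1,…,m appear in increasing order of value, the first occurrence of each l ∈ [1,m] is at an index < kl, and the first occurrence of m is at index j. Then the number of completions (s_{j+1},…,s_{kn−1}) with entries in [0,n−1] such that the full string (s_i)_{i∈[0,kn−1]} satisfies rules (R1) and (R2) equals N_{m,j}; in particular this number is independent of the particular admissible prefix chosen. -/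
/-!
Classify the completions of an admissible prefix `s_0 … s_j` with maximum `m` by the letter
`s_{j+1}`. A letter `v ≤ m` leaves an admissible prefix with the same maximum, the letter `m + 1`
one with maximum `m + 1` (possible only while `j + 1 < k (m + 1)`), and larger letters violate
(R1). If `m < n - 1` and `j + 1 ≥ k (m + 1)` there is no completion at all by (R2), and once `m`
reaches `n - 1` all remaining letters are free. This gives the one-step recurrence
`N_{m,j} = (m + 1) N_{m,j+1} + N_{m+1,j+1}`, which is the defining recursion of the table with
its `i = 0` term split off.
-/

abbrev Completions (n k j : ℕ) (p : ℕ → ℕ) : Type :=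
  {s : Fin (k * n) → Fin n //
    (∀ i : Fin (k * n), (i : ℕ) ≤ j → (s i : ℕ) = p i) ∧ RuleR1 n k s ∧ RuleR2 n k s}

structure IsAdmissiblePrefix (n k m j : ℕ) (p : ℕ → ℕ) : Prop where
  max_le : m ≤ n - 1
  lt_length : j < k * n
  le_max : ∀ i ≤ j, p i ≤ m
  exists_prev : ∀ i ≤ j, 2 ≤ p i → ∃ i' < i, p i' = p i - 1
  exists_early : ∀ w, 1 ≤ w → w ≤ m → ∃ i ≤ j, i < k * w ∧ p i = w

section Ntab

variable {n k m j : ℕ}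

lemma Ntab_of_le (hm : n - 1 ≤ m) : Ntab n k m j = n ^ (n * k - 1 - j) := by
  rw [Ntab, if_pos hm]

lemma Ntab_of_lt (hm : m < n - 1) :
    Ntab n k m j =
      ∑ i ∈ Finset.range ((m + 1) * k - j - 1), (m + 1) ^ i * Ntab n k (m + 1) (j + i + 1) := by
  rw [Ntab, if_neg (by omega)]

lemma Ntab_eq_mul_succ (hm : n - 1 ≤ m) (hj : j + 1 < k * n) :
    Ntab n k m j = n * Ntab n k m (j + 1) := by
  rw [Ntab_of_le hm, Ntab_of_le hm, ← pow_succ', Nat.mul_comm n k]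
  congr 1
  omega

lemma Ntab_eq_zero (hm : m < n - 1) (hj : k * (m + 1) ≤ j + 1) : Ntab n k m j = 0 := by
  rw [Ntab_of_lt hm, Nat.mul_comm, Nat.sub_sub, Nat.sub_eq_zero_of_le hj, Finset.sum_range_zero]

lemma Ntab_eq_mul_succ_add (hm : m < n - 1) (hj : j + 1 < k * (m + 1)) :
    Ntab n k m j = (m + 1) * Ntab n k m (j + 1) + Ntab n k (m + 1) (j + 1) := by
  have hlen : (m + 1) * k - j - 1 = (m + 1) * k - (j + 1) - 1 + 1 := by
    have := Nat.mul_comm (m + 1) k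
    omega
  rw [Ntab_of_lt hm, Ntab_of_lt hm, hlen, Finset.sum_range_succ', Finset.mul_sum]
  congr 1
  · refine Finset.sum_congr rfl fun i _ => ?_
    rw [pow_succ', Nat.mul_assoc, show j + (i + 1) + 1 = j + 1 + i + 1 by omega]
  · simp

end Ntab

section Completions

variable {n k m j : ℕ} {p : ℕ → ℕ}

lemma agree_update_iff {s : Fin (k * n) → Fin n} (hj : j + 1 < k * n) (v : Fin n) :
    (∀ i : Fin (k * n), (i : ℕ) ≤ j + 1 → (s i : ℕ) = Function.update p (j + 1) v i) ↔
      (∀ i : Fin (k * n), (i : ℕ) ≤ j → (s i : ℕ) = p i) ∧ s ⟨j + 1, hj⟩ = v := by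
  constructor
  · intro h
    refine ⟨fun i hi => ?_, Fin.ext ?_⟩
    · rw [h i (by omega), Function.update_of_ne (by omega)]
    · rw [h _ le_rfl, Function.update_self]
  · rintro ⟨h, hv⟩ i hi
    rcases Nat.lt_or_eq_of_le hi with hi | hi
    · rw [h i (by omega), Function.update_of_ne (by omega)]
    · obtain rfl : i = ⟨j + 1, hj⟩ := Fin.ext hi
      rw [Function.update_self, ← hv]

lemma card_completions_eq_sum (p : ℕ → ℕ) (hj : j + 1 < k * n) :
    Nat.card (Completions n k j p) =
      ∑ v ∈ Finset.range n, Nat.card (Completions n k (j + 1) (Function.update p (j + 1) v)) := by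
  have e : Completions n k j p ≃
      Σ v : Fin n, Completions n k (j + 1) (Function.update p (j + 1) v) :=
    (Equiv.sigmaFiberEquiv fun s : Completions n k j p => s.1 ⟨j + 1, hj⟩).symm.trans
      (Equiv.sigmaCongrRight fun v =>
        (Equiv.subtypeSubtypeEquivSubtypeInter
          (fun s => (∀ i : Fin (k * n), (i : ℕ) ≤ j → (s i : ℕ) = p i) ∧ RuleR1 n k s ∧ RuleR2 n k s)
          (fun s => s ⟨j + 1, hj⟩ = v)).trans
          (Equiv.subtypeEquivRight fun s => by rw [agree_update_iff hj v]; tauto))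
  rw [Nat.card_congr e, Nat.card_sigma,
    Fin.sum_univ_eq_sum_range fun v => Nat.card (Completions n k (j + 1) (Function.update p (j + 1) v))]

namespace IsAdmissiblePrefix

lemma update_of_le (h : IsAdmissiblePrefix n k m j p) (hj : j + 1 < k * n) {v : ℕ} (hv : v ≤ m) :
    IsAdmissiblePrefix n k m (j + 1) (Function.update p (j + 1) v) where
  max_le := h.max_le
  lt_length := hj
  le_max i hi := by
    rcases Nat.lt_or_eq_of_le hi with hi | rfl
    · rw [Function.update_of_ne (by omega)]
      exact h.le_max i (by omega)
    · rwa [Function.update_self]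
  exists_prev i hi hpi := by
    rcases Nat.lt_or_eq_of_le hi with hi | rfl
    · rw [Function.update_of_ne (by omega)] at hpi ⊢
      obtain ⟨i', hi', hpi'⟩ := h.exists_prev i (by omega) hpi
      exact ⟨i', hi', by rwa [Function.update_of_ne (by omega)]⟩
    · rw [Function.update_self] at hpi ⊢
      obtain ⟨i', hi', -, hpi'⟩ := h.exists_early (v - 1) (by omega) (by omega)
      exact ⟨i', by omega, by rwa [Function.update_of_ne (by omega)]⟩
  exists_early w hw1 hw2 := by
    obtain ⟨i, hi, hik, hpi⟩ := h.exists_early w hw1 hw2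
    exact ⟨i, by omega, hik, by rwa [Function.update_of_ne (by omega)]⟩

lemma update_succ (h : IsAdmissiblePrefix n k m j p) (hm : m < n - 1) (hj : j + 1 < k * (m + 1)) :
    IsAdmissiblePrefix n k (m + 1) (j + 1) (Function.update p (j + 1) (m + 1)) where
  max_le := hm
  lt_length := lt_of_lt_of_le hj (Nat.mul_le_mul_left k (by omega))
  le_max i hi := by
    rcases Nat.lt_or_eq_of_le hi with hi | rfl
    · rw [Function.update_of_ne (by omega)]
      exact Nat.le_succ_of_le (h.le_max i (by omega))
    · rw [Function.update_self]
  exists_prev i hi hpi := by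
    rcases Nat.lt_or_eq_of_le hi with hi | rfl
    · rw [Function.update_of_ne (by omega)] at hpi ⊢
      obtain ⟨i', hi', hpi'⟩ := h.exists_prev i (by omega) hpi
      exact ⟨i', hi', by rwa [Function.update_of_ne (by omega)]⟩
    · rw [Function.update_self] at hpi ⊢
      obtain ⟨i', hi', -, hpi'⟩ := h.exists_early m (by omega) le_rfl
      exact ⟨i', by omega, by rwa [Function.update_of_ne (by omega)]⟩
  exists_early w hw1 hw2 := by
    rcases Nat.lt_or_eq_of_le hw2 with hw2 | rfl
    · obtain ⟨i, hi, hik, hpi⟩ := h.exists_early w hw1 (by omega)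
      exact ⟨i, by omega, hik, by rwa [Function.update_of_ne (by omega)]⟩
    · exact ⟨j + 1, le_rfl, hj, Function.update_self _ _ _⟩

lemma isEmpty_completions_update (h : IsAdmissiblePrefix n k m j p) (hj : j + 1 < k * n)
    {v : ℕ} (hv : m + 2 ≤ v) (hvn : v ≤ n - 1) :
    IsEmpty (Completions n k (j + 1) (Function.update p (j + 1) v)) := by
  refine ⟨fun ⟨s, hs, hR1, _⟩ => ?_⟩
  have hsv : (s ⟨j + 1, hj⟩ : ℕ) = v := by rw [hs _ le_rfl, Function.update_self]
  obtain ⟨t, ht, hst⟩ := hR1 v (by omega) hvn _ hsv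
  replace ht : (t : ℕ) < j + 1 := ht
  rw [hs t (by omega), Function.update_of_ne (by omega)] at hst
  have := h.le_max t (by omega)
  omega

lemma isEmpty_completions_of_le (h : IsAdmissiblePrefix n k m j p) (hm : m < n - 1)
    (hj : k * (m + 1) ≤ j + 1) : IsEmpty (Completions n k j p) := by
  refine ⟨fun ⟨s, hs, _, hR2⟩ => ?_⟩
  obtain ⟨t, ht, hst⟩ := hR2 (m + 1) (by omega) hm
  rw [hs t (by omega)] at hst
  have := h.le_max t (by omega)
  omega

lemma card_completions_of_length_le (h : IsAdmissiblePrefix n k m j p) (hm : n - 1 ≤ m)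
    (hj : k * n ≤ j + 1) : Nat.card (Completions n k j p) = 1 := by
  have hjn := h.lt_length
  have hn : 0 < n := Nat.pos_of_mul_pos_left (Nat.zero_lt_of_lt hjn)
  refine Nat.card_eq_one_iff_unique.mpr ⟨⟨fun s s' => ?_⟩, ⟨?_⟩⟩
  · refine Subtype.ext (funext fun i => Fin.ext ?_)
    rw [s.2.1 i (by omega), s'.2.1 i (by omega)]
  · have hlt : ∀ i ≤ j, p i < n := fun i hi => by have := h.le_max i hi; have := h.max_le; omega
    refine ⟨fun i => ⟨p i, hlt i (by omega)⟩, fun i _ => rfl, ?_, ?_⟩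
    · intro w hw2 _ i (hi : p i = w)
      obtain ⟨i', hi', hpi'⟩ := h.exists_prev i (by omega) (by omega)
      exact ⟨⟨i', by omega⟩, hi', show p i' = w - 1 by omega⟩
    · intro w hw1 hw2
      obtain ⟨i, hi, hik, hpi⟩ := h.exists_early w hw1 (by omega)
      exact ⟨⟨i, by omega⟩, hik, hpi⟩

theorem card_completions {n k m j : ℕ} {p : ℕ → ℕ} (h : IsAdmissiblePrefix n k m j p) :
    Nat.card (Completions n k j p) = Ntab n k m j := by
  have hj := h.lt_length
  by_cases hcap : m < n - 1 ∧ k * (m + 1) ≤ j + 1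
  · have := h.isEmpty_completions_of_le hcap.1 hcap.2
    rw [Nat.card_of_isEmpty, Ntab_eq_zero hcap.1 hcap.2]
  by_cases hfull : k * n ≤ j + 1
  · have hm : n - 1 ≤ m := by
      by_contra hm
      exact hcap ⟨by omega, le_trans (Nat.mul_le_mul_left k (by omega)) hfull⟩
    rw [h.card_completions_of_length_le hm hfull, Ntab_of_le hm, Nat.mul_comm n k,
      show k * n - 1 - j = 0 by omega, pow_zero]
  have hlow : ∀ v ≤ m,
      Nat.card (Completions n k (j + 1) (Function.update p (j + 1) v)) = Ntab n k m (j + 1) :=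
    fun v hv => (h.update_of_le (by omega) hv).card_completions
  rw [card_completions_eq_sum p (by omega)]
  by_cases hm : n - 1 ≤ m
  · rw [Ntab_eq_mul_succ hm (by omega),
      Finset.sum_congr rfl fun v hv => hlow v (by rw [Finset.mem_range] at hv; omega),
      Finset.sum_const, Finset.card_range, smul_eq_mul]
  have hhigh : ∀ v ∈ Finset.range n, v ∉ Finset.range (m + 2) →
      Nat.card (Completions n k (j + 1) (Function.update p (j + 1) v)) = 0 := fun v hv hv' => by
    have := h.isEmpty_completions_update (by omega) (v := v) (by rw [Finset.mem_range] at hv'; omega)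
      (by rw [Finset.mem_range] at hv; omega)
    exact Nat.card_of_isEmpty
  rw [Ntab_eq_mul_succ_add (by omega) (by omega),
    ← Finset.sum_subset (Finset.range_subset_range.mpr (by omega)) hhigh, Finset.sum_range_succ,
    Finset.sum_congr rfl fun v hv => hlow v (by rw [Finset.mem_range] at hv; omega),
    (h.update_succ (by omega) (by omega)).card_completions,
    Finset.sum_const, Finset.card_range, smul_eq_mul]
termination_by (n - 1 - m, k * n - j)

end IsAdmissiblePrefix

end Completions

lemma isAdmissiblePrefix_of_firstOccurrence {n k m j : ℕ} {p g : ℕ → ℕ}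
    (hm1 : 1 ≤ m) (hm2 : m ≤ n - 1) (hpval : ∀ i ≤ j, p i ≤ m)
    (hg : ∀ v : ℕ, 1 ≤ v → v ≤ m → g v ≤ j ∧ p (g v) = v ∧ ∀ i < g v, p i ≠ v)
    (hgmono : ∀ v : ℕ, 2 ≤ v → v ≤ m → g (v - 1) < g v)
    (hgbound : ∀ v : ℕ, 1 ≤ v → v ≤ m → g v < k * v) (hgm : g m = j) :
    IsAdmissiblePrefix n k m j p where
  max_le := hm2
  lt_length := by
    have := hgbound m hm1 le_rfl
    have := Nat.mul_le_mul_left k (show m ≤ n by omega)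
    omega
  le_max := hpval
  exists_prev i hi hpi := by
    have hpm := hpval i hi
    obtain ⟨-, -, hfirst⟩ := hg (p i) (by omega) hpm
    have hgi : g (p i) ≤ i := not_lt.mp fun hlt => hfirst i hlt rfl
    obtain ⟨-, hprev, -⟩ := hg (p i - 1) (by omega) (by omega)
    exact ⟨g (p i - 1), lt_of_lt_of_le (hgmono (p i) hpi hpm) hgi, hprev⟩
  exists_early w hw1 hw2 :=
    ⟨g w, (hg w hw1 hw2).1, hgbound w hw1 hw2, (hg w hw1 hw2).2.1⟩

theorem stmt11_general (n k m j : ℕ)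
    (hm1 : 1 ≤ m) (hm2 : m ≤ n - 1)
    (p : ℕ → ℕ)
    (hpval : ∀ i ≤ j, p i ≤ m)
    (g : ℕ → ℕ)
    (hg : ∀ v : ℕ, 1 ≤ v → v ≤ m → g v ≤ j ∧ p (g v) = v ∧ ∀ i < g v, p i ≠ v)
    (hgmono : ∀ v : ℕ, 2 ≤ v → v ≤ m → g (v - 1) < g v)
    (hgbound : ∀ v : ℕ, 1 ≤ v → v ≤ m → g v < k * v)
    (hgm : g m = j) :
    Nat.card {s : Fin (k * n) → Fin n //
        (∀ i : Fin (k * n), (i : ℕ) ≤ j → (s i : ℕ) = p i) ∧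
        RuleR1 n k s ∧ RuleR2 n k s} = Ntab n k m j :=
  (isAdmissiblePrefix_of_firstOccurrence hm1 hm2 hpval hg hgmono hgbound hgm).card_completions

/-- Fix `n ≥ 2`, `k ≥ 1`, `m ∈ [1, n-1]`, `j ∈ [m-1, mk-1]`, and an admissible
prefix `p` on positions `0, …, j`:  its entries lie in `[0, m]`, the values
occurring are exactly `0, 1, …, m` (here `g v` is the first-occurrence index
of `v` for `v ∈ [1, m]`), the first occurrences of `1, …, m` appear in
increasing order of value, the first occurrence of each `l ∈ [1, m]` is at an
index `< k*l`, and the first occurrence of `m` is at index `j`.  Then the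
number of completions of the prefix to a full string of length `k*n` with
entries in `[0, n-1]` satisfying rules (R1) and (R2) equals `N_{m,j}` (in
particular it is independent of the admissible prefix chosen). -/
theorem stmt11 (n k m j : ℕ) (hn : 2 ≤ n) (hk : 1 ≤ k)
    (hm1 : 1 ≤ m) (hm2 : m ≤ n - 1) (hj1 : m - 1 ≤ j) (hj2 : j ≤ m * k - 1)
    (p : ℕ → ℕ)
    (hpval : ∀ i ≤ j, p i ≤ m)
    (hzero : ∃ i ≤ j, p i = 0)
    (g : ℕ → ℕ)
    (hg : ∀ v : ℕ, 1 ≤ v → v ≤ m → g v ≤ j ∧ p (g v) = v ∧ ∀ i < g v, p i ≠ v)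
    (hgmono : ∀ v : ℕ, 2 ≤ v → v ≤ m → g (v - 1) < g v)
    (hgbound : ∀ v : ℕ, 1 ≤ v → v ≤ m → g v < k * v)
    (hgm : g m = j) :
    Nat.card {s : Fin (k * n) → Fin n //
        (∀ i : Fin (k * n), (i : ℕ) ≤ j → (s i : ℕ) = p i) ∧
        RuleR1 n k s ∧ RuleR2 n k s} = Ntab n k m j :=
  stmt11_general n k m j hm1 hm2 p hpval g hg hgmono hgbound hgm
end
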